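/- arXiv:1702.02085 — 9 statements merged into one kernel-verified Lean document; each statement's English description precedes it below -/
import Mathlib

section
/- Let Z be an n×n complex matrix with singular values r_1,...,r_n all satisfying 0 ≤ r_k < 1 (i.e., Z is a strict contraction). Then for any n×n unitary matrix U, ∏_{k=1}^n (1-r_k)/(1+r_k) ≤ det(I - Z*Z)/|det(I - UZ)|² ≤ ∏_{k=1}^n (1+r_k)/(1-r_k). -/
/-!
Diagonalise `ZᴴZ = W diag(r²) Wᴴ`. Then `B = Wᴴ U Z W` has orthogonal columns of lengths
`r k`, `det (1 - B) = det (1 - U Z)` and `det (1 - ZᴴZ) = ∏ (1 - r k) (1 + r k)`. Replace the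
columns of `1` by those of `1 - B` one at a time: by the matrix determinant lemma each step
multiplies the determinant by `1 - x a`, where `M x = B eₐ` for the current matrix `M`, and
orthogonality of the columns forces `‖x a‖ ≤ r a`. Hence
`∏ (1 - r k) ≤ ‖det (1 - U Z)‖ ≤ ∏ (1 + r k)`.
-/

open Matrix
open scoped ComplexOrder

namespace Matrix

section CommRing

variable {R ι : Type*} [CommRing R] [Fintype ι] [DecidableEq ι]

theorem det_sub_vecMulVec_single {M : Matrix ι ι R} (hM : IsUnit M.det) (b : ι → R) (a : ι) :
    (M - vecMulVec b (Pi.single a 1)).det = M.det * (1 - (M⁻¹ *ᵥ b) a) := by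
  have h := det_add_replicateCol_mul_replicateRow (ι := Unit) hM (-b) (Pi.single a 1)
  rw [← vecMulVec_eq, neg_vecMulVec, ← sub_eq_add_neg] at h
  rw [h, det_unique (n := Unit)]
  simp [Matrix.mul_apply, mulVec, dotProduct, Pi.single_apply, sub_eq_add_neg]

theorem mul_diagonal_ite_insert (B : Matrix ι ι R) {s : Finset ι} {a : ι} (ha : a ∉ s) :
    B * diagonal (fun i => if i ∈ insert a s then 1 else 0) =
      B * diagonal (fun i => if i ∈ s then 1 else 0) +
        vecMulVec (B *ᵥ Pi.single a 1) (Pi.single a 1) := by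
  ext i j
  by_cases hj : j = a
  · subst hj; simp [mul_diagonal, vecMulVec_apply, ha]
  · simp [mul_diagonal, vecMulVec_apply, hj]

end CommRing

variable {𝕜 m ι : Type*} [RCLike 𝕜] [Fintype m] [Fintype ι] [DecidableEq ι]

theorem sum_norm_sq_mulVec_of_conjTranspose_mul_self_eq_diagonal {B : Matrix m ι 𝕜}
    {d : ι → ℝ} (hB : Bᴴ * B = diagonal fun i => (d i : 𝕜)) (u : ι → 𝕜) :
    ∑ i, ‖(B *ᵥ u) i‖ ^ 2 = ∑ i, d i * ‖u i‖ ^ 2 := by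
  have key : star (B *ᵥ u) ⬝ᵥ (B *ᵥ u) = star u ⬝ᵥ ((Bᴴ * B) *ᵥ u) := by
    rw [star_mulVec, dotProduct_mulVec, vecMul_vecMul, ← dotProduct_mulVec]
  rw [hB] at key
  apply RCLike.ofReal_injective (K := 𝕜)
  simp only [dotProduct, mulVec_diagonal, Pi.star_apply, RCLike.star_def, RCLike.conj_mul] at key
  push_cast
  rw [key]
  refine Finset.sum_congr rfl fun i _ => ?_
  rw [mul_left_comm, RCLike.conj_mul]

theorem norm_apply_le_of_eq_mulVec_single_add {B : Matrix ι ι 𝕜} {r : ι → ℝ}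
    (hB : Bᴴ * B = diagonal fun i => ((r i ^ 2 : ℝ) : 𝕜)) (hr0 : ∀ i, 0 ≤ r i)
    (hr1 : ∀ i, r i ≤ 1) {s : Finset ι} {a : ι} (ha : a ∉ s) {x : ι → 𝕜}
    (hx : x = B *ᵥ (Pi.single a 1 + diagonal (fun i => if i ∈ s then 1 else 0) *ᵥ x)) :
    ‖x a‖ ≤ r a := by
  have hnorm : ∑ i, ‖x i‖ ^ 2 = r a ^ 2 + ∑ i ∈ s, r i ^ 2 * ‖x i‖ ^ 2 := by
    conv_lhs => rw [hx]
    rw [sum_norm_sq_mulVec_of_conjTranspose_mul_self_eq_diagonal hB,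
      ← Finset.sum_subset (Finset.subset_univ (insert a s)), Finset.sum_insert ha]
    · refine congrArg₂ (· + ·) (by simp [mulVec_diagonal, ha])
        (Finset.sum_congr rfl fun i hi => ?_)
      have : i ≠ a := ne_of_mem_of_not_mem hi ha
      simp [mulVec_diagonal, hi, this]
    · intro i _ hi
      rw [Finset.mem_insert, not_or] at hi
      simp [mulVec_diagonal, hi.1, hi.2]
  have hsub : ‖x a‖ ^ 2 + ∑ i ∈ s, ‖x i‖ ^ 2 ≤ ∑ i, ‖x i‖ ^ 2 := by
    rw [← Finset.sum_insert ha (f := fun i => ‖x i‖ ^ 2)]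
    exact Finset.sum_le_univ_sum_of_nonneg fun _ => by positivity
  have hs : ∑ i ∈ s, r i ^ 2 * ‖x i‖ ^ 2 ≤ ∑ i ∈ s, ‖x i‖ ^ 2 :=
    Finset.sum_le_sum fun i _ =>
      mul_le_of_le_one_left (by positivity) (pow_le_one₀ (hr0 i) (hr1 i))
  exact (sq_le_sq₀ (norm_nonneg _) (hr0 a)).1 (by linarith)

theorem norm_det_one_sub_mul_diagonal_ite_mem_Icc {B : Matrix ι ι 𝕜} {r : ι → ℝ}
    (hB : Bᴴ * B = diagonal fun i => ((r i ^ 2 : ℝ) : 𝕜)) (hr0 : ∀ i, 0 ≤ r i)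
    (hr1 : ∀ i, r i < 1) (s : Finset ι) :
    ‖(1 - B * diagonal fun i => if i ∈ s then 1 else 0).det‖ ∈
      Set.Icc (∏ i ∈ s, (1 - r i)) (∏ i ∈ s, (1 + r i)) := by
  induction s using Finset.induction_on with
  | empty => simp
  | insert a s ha ih =>
    set M := 1 - B * diagonal fun i => if i ∈ s then 1 else 0 with hMdef
    have hM : IsUnit M.det := isUnit_iff_ne_zero.2 <| norm_pos_iff.1 <|
      (Finset.prod_pos fun i _ => sub_pos.2 (hr1 i)).trans_le ih.1
    set x := M⁻¹ *ᵥ (B *ᵥ Pi.single a 1)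
    have hx : x = B *ᵥ (Pi.single a 1 + (diagonal fun i => if i ∈ s then 1 else 0) *ᵥ x) := by
      have hMx : M *ᵥ x = B *ᵥ Pi.single a 1 := by
        rw [mulVec_mulVec, mul_nonsing_inv _ hM, one_mulVec]
      rw [hMdef, sub_mulVec, one_mulVec, ← mulVec_mulVec, sub_eq_iff_eq_add] at hMx
      rwa [mulVec_add]
    have hxa := norm_apply_le_of_eq_mulVec_single_add hB hr0 (fun i => (hr1 i).le) ha hx
    have hdet : (1 - B * diagonal fun i => if i ∈ insert a s then 1 else 0).det =
        M.det * (1 - x a) := by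
      rw [mul_diagonal_ite_insert B ha, ← sub_sub, det_sub_vecMulVec_single hM]
    have hlow : 1 - r a ≤ ‖1 - x a‖ := by
      have := norm_sub_norm_le (1 : 𝕜) (x a)
      rw [norm_one] at this
      linarith
    have hupp : ‖1 - x a‖ ≤ 1 + r a := (norm_sub_le _ _).trans (by rw [norm_one]; linarith)
    rw [hdet, norm_mul, Finset.prod_insert ha, Finset.prod_insert ha, mul_comm ‖M.det‖]
    exact ⟨mul_le_mul hlow ih.1 (Finset.prod_nonneg fun i _ => (sub_pos.2 (hr1 i)).le)
        (norm_nonneg _),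
      mul_le_mul hupp ih.2 (norm_nonneg _) (by linarith [hr0 a])⟩

theorem norm_det_one_sub_mem_Icc_of_conjTranspose_mul_self_eq {A H : Matrix ι ι 𝕜}
    (hH : H.IsHermitian) (hAH : Aᴴ * A = H) {r : ι → ℝ}
    (hr : ∀ i, r i = √(hH.eigenvalues i)) (hr1 : ∀ i, r i < 1) :
    ‖(1 - A).det‖ ∈ Set.Icc (∏ i, (1 - r i)) (∏ i, (1 + r i)) := by
  set W : Matrix ι ι 𝕜 := (hH.eigenvectorUnitary : Matrix ι ι 𝕜)
  have hWW : W * star W = 1 := Unitary.mul_star_self_of_mem hH.eigenvectorUnitary.2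
  have hsq : ∀ i, r i ^ 2 = hH.eigenvalues i := fun i => by
    rw [hr, Real.sq_sqrt ((hAH ▸ posSemidef_conjTranspose_mul_self A).eigenvalues_nonneg i)]
  have hB :
      (star W * A * W)ᴴ * (star W * A * W) = diagonal fun i => ((r i ^ 2 : ℝ) : 𝕜) := by
    calc (star W * A * W)ᴴ * (star W * A * W) = star W * (Aᴴ * A) * W := by
          simp only [conjTranspose_mul, star_eq_conjTranspose, conjTranspose_conjTranspose,
            Matrix.mul_assoc]
          rw [← Matrix.mul_assoc W, ← star_eq_conjTranspose, hWW, Matrix.one_mul]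
      _ = _ := by
          rw [hAH, ← Unitary.conjStarAlgAut_star_apply (S := 𝕜),
            hH.conjStarAlgAut_star_eigenvectorUnitary]
          simp [hsq]
  have hdet : (1 - star W * A * W).det = (1 - A).det := by
    rw [mul_assoc, det_one_sub_mul_comm, mul_assoc, hWW, mul_one]
  simpa [hdet] using norm_det_one_sub_mul_diagonal_ite_mem_Icc hB
    (fun i => hr i ▸ Real.sqrt_nonneg _) hr1 Finset.univ

theorem IsHermitian.det_one_sub {H : Matrix ι ι 𝕜} (hH : H.IsHermitian) :
    (1 - H).det = ∏ i, (1 - (hH.eigenvalues i : 𝕜)) := by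
  rw [← map_one (scalar ι), ← eval_charpoly, hH.charpoly_eq, Polynomial.eval_prod]
  simp

end Matrix

theorem mul_div_sq_mem_Icc_of_mem_Icc {p q D : ℝ} (hp : 0 < p) (hD : D ∈ Set.Icc p q) :
    p * q / D ^ 2 ∈ Set.Icc (p / q) (q / p) := by
  obtain ⟨hpD, hDq⟩ := hD
  have hD0 : 0 < D := hp.trans_le hpD
  have hq : 0 < q := hD0.trans_le hDq
  constructor
  · calc p / q = p * q / q ^ 2 := by field_simp
      _ ≤ p * q / D ^ 2 := by gcongr
  · calc p * q / D ^ 2 ≤ p * q / p ^ 2 := by gcongr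
      _ = q / p := by field_simp

/-- Harnack type determinantal inequality of Tung (1964): for a strict contraction `Z`
(all singular values `r k < 1`) and any unitary `U`,
`∏ (1-r k)/(1+r k) ≤ det(I - ZᴴZ)/|det(I - UZ)|² ≤ ∏ (1+r k)/(1-r k)`. -/
theorem tung_harnack_inequality (n : ℕ) (Z : Matrix (Fin n) (Fin n) ℂ)
    (r : Fin n → ℝ)
    (hr : ∀ k, r k = Real.sqrt ((Matrix.isHermitian_conjTranspose_mul_self Z).eigenvalues k))
    (hr1 : ∀ k, r k < 1)
    (U : Matrix (Fin n) (Fin n) ℂ) (hU : U ∈ Matrix.unitaryGroup (Fin n) ℂ) :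
    ∏ k, (1 - r k) / (1 + r k) ≤ ((1 - Zᴴ * Z).det).re / ‖(1 - U * Z).det‖ ^ 2 ∧
    ((1 - Zᴴ * Z).det).re / ‖(1 - U * Z).det‖ ^ 2 ≤ ∏ k, (1 + r k) / (1 - r k) := by
  have hH := isHermitian_conjTranspose_mul_self Z
  have hUZ : (U * Z)ᴴ * (U * Z) = Zᴴ * Z := by
    rw [conjTranspose_mul, Matrix.mul_assoc, ← Matrix.mul_assoc Uᴴ, ← star_eq_conjTranspose U,
      Unitary.star_mul_self_of_mem hU, Matrix.one_mul]
  have hnum : ((1 - Zᴴ * Z).det).re = (∏ k, (1 - r k)) * ∏ k, (1 + r k) := by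
    have hsq : ∀ k, r k ^ 2 = hH.eigenvalues k := fun k => by
      rw [hr, Real.sq_sqrt ((posSemidef_conjTranspose_mul_self Z).eigenvalues_nonneg k)]
    have hdet : (1 - Zᴴ * Z).det = ((∏ k, (1 - hH.eigenvalues k) : ℝ) : ℂ) := by
      rw [hH.det_one_sub]
      push_cast
      rfl
    rw [hdet, Complex.ofReal_re, ← Finset.prod_mul_distrib]
    exact Finset.prod_congr rfl fun k _ => by rw [← hsq]; ring
  rw [Finset.prod_div_distrib, Finset.prod_div_distrib, hnum]
  exact mul_div_sq_mem_Icc_of_mem_Icc (Finset.prod_pos fun k _ => sub_pos.2 (hr1 k))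
    (norm_det_one_sub_mem_Icc_of_conjTranspose_mul_self_eq hH hUZ hr hr1)
end

section
/- Let A be an n×n complex matrix with singular values r_1,...,r_n. Then |det(I - A)| ≤ ∏_{k=1}^n (1 + r_k). -/
/-!
Let `b` be an orthonormal eigenbasis of `AᴴA`. Then `det (1 - A)` is the determinant, with respect
to `b`, of the vectors `b k - A b k`, whose norms are at most `1 + ‖A b k‖ = 1 + r k`.
Hadamard's inequality bounds the determinant of a family of vectors with respect to an
orthonormal basis by the product of their norms; it follows from Gram–Schmidt, which makes the
coefficient matrix triangular with diagonal entries `⟪g k, v k⟫`.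
-/

open Matrix Module

theorem OrthonormalBasis.norm_det_le_prod_norm {𝕜 E ι : Type*} [RCLike 𝕜] [NormedAddCommGroup E]
    [InnerProductSpace 𝕜 E] [Fintype ι] [LinearOrder ι] [LocallyFiniteOrderBot ι]
    (b : OrthonormalBasis ι 𝕜 E) (v : ι → E) :
    ‖b.toBasis.det v‖ ≤ ∏ i, ‖v i‖ := by
  have := b.toBasis.finiteDimensional_of_finite
  have hdim : finrank 𝕜 E = Fintype.card ι := finrank_eq_card_basis b.toBasis
  set g := InnerProductSpace.gramSchmidtOrthonormalBasis hdim v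
  rw [b.toBasis.det.eq_smul_basis_det g.toBasis, AlternatingMap.smul_apply, smul_eq_mul, norm_mul,
    OrthonormalBasis.coe_toBasis, b.det_to_matrix_orthonormalBasis, one_mul,
    InnerProductSpace.gramSchmidtOrthonormalBasis_det, norm_prod]
  gcongr with i
  simpa [g.orthonormal.1 i] using norm_inner_le_norm (𝕜 := 𝕜) (g i) (v i)

theorem Matrix.det_toEuclideanLin {𝕜 n : Type*} [RCLike 𝕜] [Fintype n] [DecidableEq n]
    (A : Matrix n n 𝕜) : LinearMap.det (toEuclideanLin A) = A.det := by
  rw [toEuclideanLin_eq_toLin_orthonormal, LinearMap.det_toLin]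

theorem Matrix.norm_toEuclideanLin_eigenvectorBasis {𝕜 m n : Type*} [RCLike 𝕜] [Fintype m]
    [Fintype n] [DecidableEq n] (A : Matrix m n 𝕜) (k : n) :
    ‖toEuclideanLin A ((isHermitian_conjTranspose_mul_self A).eigenvectorBasis k)‖ =
      √((isHermitian_conjTranspose_mul_self A).eigenvalues k) := by
  classical
  set hH := isHermitian_conjTranspose_mul_self A
  set v := hH.eigenvectorBasis k
  have hv : toEuclideanLin (Aᴴ * A) v = (hH.eigenvalues k : 𝕜) • v := by
    rw [toLpLin_apply, hH.mulVec_eigenvectorBasis, RCLike.real_smul_eq_coe_smul (K := 𝕜)]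
    rfl
  rw [← Real.sqrt_sq (norm_nonneg _), @norm_sq_eq_re_inner 𝕜, ← LinearMap.adjoint_inner_right,
    ← toEuclideanLin_conjTranspose_eq_adjoint, ← LinearMap.comp_apply, ← toLpLin_mul, hv,
    inner_smul_right, inner_self_eq_norm_sq_to_K, hH.eigenvectorBasis.orthonormal.1 k]
  simp

/-- For any `n×n` complex matrix `A` with singular values `r k`,
`|det(I - A)| ≤ ∏ (1 + r k)`. -/
theorem abs_det_one_sub_le_prod (n : ℕ) (A : Matrix (Fin n) (Fin n) ℂ)
    (r : Fin n → ℝ)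
    (hr : ∀ k, r k = Real.sqrt ((Matrix.isHermitian_conjTranspose_mul_self A).eigenvalues k)) :
    ‖(1 - A).det‖ ≤ ∏ k, (1 + r k) := by
  set b := (isHermitian_conjTranspose_mul_self A).eigenvectorBasis
  have hdet : (1 - A).det = b.toBasis.det fun k => b k - toEuclideanLin A (b k) := by
    rw [← det_toEuclideanLin, ← mul_one (LinearMap.det _), ← b.toBasis.det_self,
      ← Basis.det_comp]
    congr 1
    ext k : 1
    simp
  rw [hdet]
  refine (b.norm_det_le_prod_norm _).trans
    (Finset.prod_le_prod (fun _ _ => norm_nonneg _) fun k _ => ?_)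
  calc ‖b k - toEuclideanLin A (b k)‖ ≤ ‖b k‖ + ‖toEuclideanLin A (b k)‖ := norm_sub_le _ _
    _ = 1 + r k := by rw [b.norm_eq_one, norm_toEuclideanLin_eigenvectorBasis, hr]
end

section
/- Let A be an n×n complex matrix with singular values r_1,...,r_n all satisfying 0 ≤ r_k < 1. Then ∏_{k=1}^n (1 - r_k) ≤ |det(I - A)| ≤ ∏_{k=1}^n (1 + r_k). -/
/-!
Conjugating by a unitary that diagonalizes `AᴴA`, we may assume that the columns `b k` of `A`
are pairwise orthogonal with `‖b k‖ = r k`. Let `B_s` be `A` with the columns outside `s`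
replaced by zero, and induct on `s`. By Cramer's rule, adding the column `m ∉ s` multiplies
`det (1 - B_s)` by `1 - y m`, where `y = b m + B_s y`. As `b m` is orthogonal to the range of
the contraction `B_s`, whose `m`-th column vanishes, Pythagoras gives `‖y m‖ ≤ ‖b m‖ = r m`.
-/

open Matrix

namespace Matrix

section CommRing

variable {n R : Type*} [Fintype n] [DecidableEq n] [CommRing R]

theorem det_updateCol_eq_det_mul_inv_mulVec {M : Matrix n n R} (hM : IsUnit M.det) (i : n)
    (v : n → R) : (M.updateCol i v).det = M.det * (M⁻¹ *ᵥ v) i := by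
  rw [← cramer_apply, ← det_smul_inv_mulVec_eq_cramer M v hM, Pi.smul_apply, smul_eq_mul]

theorem det_updateCol_col_sub {M : Matrix n n R} (hM : IsUnit M.det) (i : n) (v : n → R) :
    (M.updateCol i (M.col i - v)).det = M.det * (1 - (M⁻¹ *ᵥ v) i) := by
  rw [det_updateCol_eq_det_mul_inv_mulVec hM, ← mulVec_single_one, mulVec_sub, mulVec_mulVec,
    nonsing_inv_mul _ hM, one_mulVec]
  simp

theorem one_sub_mul_diagonal_insert (B : Matrix n n R) {s : Finset n} {m : n} (hm : m ∉ s) :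
    1 - B * diagonal (fun j => if j ∈ insert m s then 1 else 0) =
      (1 - B * diagonal (fun j => if j ∈ s then 1 else 0)).updateCol m
        ((1 - B * diagonal (fun j => if j ∈ s then 1 else 0)).col m - B.col m) := by
  ext i j
  rcases eq_or_ne j m with rfl | hj
  · simp [hm]
  · simp [hj]

end CommRing

variable {𝕜 n : Type*} [RCLike 𝕜] [Fintype n] [DecidableEq n]

theorem star_dotProduct_diagonal_mulVec (c : n → ℝ) (y : n → 𝕜) :
    star y ⬝ᵥ (diagonal (fun j => (c j : 𝕜)) *ᵥ y) = ((∑ j, c j * ‖y j‖ ^ 2 : ℝ) : 𝕜) := by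
  simp only [dotProduct, mulVec_diagonal, Pi.star_apply, RCLike.star_def]
  push_cast
  refine Finset.sum_congr rfl fun j _ => ?_
  rw [mul_left_comm, RCLike.conj_mul]

theorem star_dotProduct_self (y : n → 𝕜) :
    star y ⬝ᵥ y = ((∑ j, ‖y j‖ ^ 2 : ℝ) : 𝕜) := by
  simpa using star_dotProduct_diagonal_mulVec 1 y

theorem conjTranspose_mul_diagonal_mul_mul_diagonal {B : Matrix n n 𝕜} {e : n → 𝕜}
    (hB : Bᴴ * B = diagonal e) (p q : n → 𝕜) :
    (B * diagonal p)ᴴ * (B * diagonal q) = diagonal (fun j => star (p j) * e j * q j) := by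
  rw [conjTranspose_mul, diagonal_conjTranspose, Matrix.mul_assoc, ← Matrix.mul_assoc Bᴴ, hB,
    diagonal_mul_diagonal, diagonal_mul_diagonal]
  simp only [Pi.star_apply, mul_assoc]

theorem norm_sq_apply_le_of_eq_add_mulVec {C : Matrix n n 𝕜} {c : n → ℝ}
    (hC : Cᴴ * C = diagonal (fun j => (c j : 𝕜))) (hc : ∀ j, c j ≤ 1) {m : n} (hcm : c m = 0)
    {b y : n → 𝕜} (hb : Cᴴ *ᵥ b = 0) (hy : y = b + C *ᵥ y) :
    ‖y m‖ ^ 2 ≤ ∑ i, ‖b i‖ ^ 2 := by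
  have hcross : star b ⬝ᵥ C *ᵥ y = 0 := by
    rw [dotProduct_mulVec, ← conjTranspose_conjTranspose C, ← star_mulVec, hb, star_zero,
      zero_dotProduct]
  have hpyth : star y ⬝ᵥ y = star b ⬝ᵥ b + star (C *ᵥ y) ⬝ᵥ C *ᵥ y := by
    conv_lhs => rw [hy]
    rw [star_add, add_dotProduct, dotProduct_add, dotProduct_add, hcross, star_dotProduct (C *ᵥ y),
      hcross, star_zero, add_zero, zero_add]
  rw [star_mulVec, ← dotProduct_mulVec, mulVec_mulVec, hC, star_dotProduct_diagonal_mulVec,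
    star_dotProduct_self, star_dotProduct_self] at hpyth
  have hsum : ∑ j, (1 - c j) * ‖y j‖ ^ 2 = ∑ i, ‖b i‖ ^ 2 := by
    have : ∑ j, ‖y j‖ ^ 2 = ∑ i, ‖b i‖ ^ 2 + ∑ j, c j * ‖y j‖ ^ 2 := by exact_mod_cast hpyth
    simp only [sub_mul, one_mul, Finset.sum_sub_distrib]
    linarith
  calc ‖y m‖ ^ 2 = (1 - c m) * ‖y m‖ ^ 2 := by rw [hcm, sub_zero, one_mul]
    _ ≤ ∑ j, (1 - c j) * ‖y j‖ ^ 2 :=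
      Finset.single_le_sum (fun j _ => mul_nonneg (sub_nonneg.2 (hc j)) (sq_nonneg ‖y j‖))
        (Finset.mem_univ m)
    _ = ∑ i, ‖b i‖ ^ 2 := hsum


section GramDiagonal

variable {B : Matrix n n 𝕜} {d : n → ℝ}

theorem norm_apply_le_of_eq_col_add_mulVec (hd : ∀ k, 0 ≤ d k ∧ d k < 1)
    (hB : Bᴴ * B = diagonal (fun k => (d k : 𝕜) ^ 2)) {s : Finset n} {m : n} (hm : m ∉ s)
    {y : n → 𝕜} (hy : y = B.col m + (B * diagonal (fun j => if j ∈ s then 1 else 0)) *ᵥ y) :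
    ‖y m‖ ≤ d m := by
  set C := B * diagonal (fun j => if j ∈ s then (1 : 𝕜) else 0)
  have hC : Cᴴ * C = diagonal (fun j => ((if j ∈ s then d j ^ 2 else 0 : ℝ) : 𝕜)) := by
    rw [conjTranspose_mul_diagonal_mul_mul_diagonal hB]
    congr 1; ext j; split_ifs <;> simp
  have hc (j : n) : (if j ∈ s then d j ^ 2 else 0) ≤ 1 := by
    split_ifs
    · exact pow_le_one₀ (hd j).1 (hd j).2.le
    · exact zero_le_one
  have hb : Cᴴ *ᵥ B.col m = 0 := by
    have :=
      conjTranspose_mul_diagonal_mul_mul_diagonal hB (fun j => if j ∈ s then 1 else 0) fun _ => 1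
    rw [diagonal_one, Matrix.mul_one] at this
    rw [← mulVec_single_one, mulVec_mulVec, this, diagonal_mulVec_single]
    simp [hm]
  have hcol : ∑ i, ‖B.col m i‖ ^ 2 = d m ^ 2 := by
    have : star (B.col m) ⬝ᵥ B.col m = (Bᴴ * B) m m := rfl
    rw [star_dotProduct_self, hB, diagonal_apply_eq] at this
    exact_mod_cast this
  have := norm_sq_apply_le_of_eq_add_mulVec hC hc (m := m) (if_neg hm) hb hy
  rw [hcol] at this
  exact (pow_le_pow_iff_left₀ (norm_nonneg _) (hd m).1 two_ne_zero).1 this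

theorem prod_one_sub_le_norm_det_one_sub_mul_diagonal_le (hd : ∀ k, 0 ≤ d k ∧ d k < 1)
    (hB : Bᴴ * B = diagonal (fun k => (d k : 𝕜) ^ 2)) (s : Finset n) :
    ∏ k ∈ s, (1 - d k) ≤ ‖(1 - B * diagonal (fun j => if j ∈ s then 1 else 0)).det‖ ∧
      ‖(1 - B * diagonal (fun j => if j ∈ s then 1 else 0)).det‖ ≤ ∏ k ∈ s, (1 + d k) := by
  induction s using Finset.induction_on with
  | empty => simp
  | insert m s hm ih =>
    set M := 1 - B * diagonal (fun j => if j ∈ s then (1 : 𝕜) else 0) with hM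
    have hlow : 0 < ∏ k ∈ s, (1 - d k) := Finset.prod_pos fun k _ => sub_pos.2 (hd k).2
    have hunit : IsUnit M.det := isUnit_iff_ne_zero.2 (norm_pos_iff.1 (hlow.trans_le ih.1))
    set y := M⁻¹ *ᵥ B.col m
    have hy : y = B.col m + (B * diagonal (fun j => if j ∈ s then 1 else 0)) *ᵥ y := by
      have : M *ᵥ y = B.col m := by rw [mulVec_mulVec, mul_nonsing_inv _ hunit, one_mulVec]
      rw [hM, sub_mulVec, one_mulVec] at this
      rw [← this, sub_add_cancel]
    have hym := norm_apply_le_of_eq_col_add_mulVec hd hB hm hy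
    have h1 : 1 - d m ≤ ‖1 - y m‖ := by
      have := norm_sub_norm_le (1 : 𝕜) (y m)
      rw [norm_one] at this
      linarith
    have h2 : ‖1 - y m‖ ≤ 1 + d m := (norm_sub_le _ _).trans (by rw [norm_one]; linarith)
    rw [one_sub_mul_diagonal_insert B hm, det_updateCol_col_sub hunit, norm_mul,
      Finset.prod_insert hm, Finset.prod_insert hm, mul_comm ‖M.det‖]
    exact ⟨mul_le_mul h1 ih.1 hlow.le (norm_nonneg _),
      mul_le_mul h2 ih.2 (norm_nonneg _) (by linarith [(hd m).1])⟩

theorem prod_one_sub_le_norm_det_one_sub_le (hd : ∀ k, 0 ≤ d k ∧ d k < 1)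
    (hB : Bᴴ * B = diagonal (fun k => (d k : 𝕜) ^ 2)) :
    ∏ k, (1 - d k) ≤ ‖(1 - B).det‖ ∧ ‖(1 - B).det‖ ≤ ∏ k, (1 + d k) := by
  simpa using prod_one_sub_le_norm_det_one_sub_mul_diagonal_le hd hB Finset.univ

end GramDiagonal

section Unitary

variable {R : Type*} [CommRing R] [StarRing R] {V : Matrix n n R}

theorem conjTranspose_mul_self_star_mul_mul (hV : V ∈ unitaryGroup n R) (A : Matrix n n R) :
    (star V * A * V)ᴴ * (star V * A * V) = star V * (Aᴴ * A) * V := by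
  rw [← star_eq_conjTranspose, star_mul, star_mul, star_star, ← star_eq_conjTranspose]
  simp only [Matrix.mul_assoc]
  rw [← Matrix.mul_assoc V, mem_unitaryGroup_iff.1 hV, Matrix.one_mul]

theorem det_one_sub_star_mul_mul (hV : V ∈ unitaryGroup n R) (A : Matrix n n R) :
    (1 - star V * A * V).det = (1 - A).det := by
  rw [Matrix.mul_assoc, det_one_sub_mul_comm, Matrix.mul_assoc, mem_unitaryGroup_iff.1 hV,
    Matrix.mul_one]

end Unitary

theorem IsHermitian.star_eigenvectorUnitary_mul_mul {A : Matrix n n 𝕜} (hA : A.IsHermitian) :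
    star (hA.eigenvectorUnitary : Matrix n n 𝕜) * A * (hA.eigenvectorUnitary : Matrix n n 𝕜) =
      diagonal (RCLike.ofReal ∘ hA.eigenvalues) := by
  rw [← hA.conjStarAlgAut_star_eigenvectorUnitary, Unitary.conjStarAlgAut_star_apply]

end Matrix

/-- For a strict contraction `A` with singular values `r k ∈ [0,1)`,
`∏ (1 - r k) ≤ |det(I - A)| ≤ ∏ (1 + r k)`. -/
theorem prod_one_sub_le_abs_det_le (n : ℕ) (A : Matrix (Fin n) (Fin n) ℂ)
    (r : Fin n → ℝ)
    (hr : ∀ k, r k = Real.sqrt ((Matrix.isHermitian_conjTranspose_mul_self A).eigenvalues k))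
    (hr1 : ∀ k, r k < 1) :
    ∏ k, (1 - r k) ≤ ‖(1 - A).det‖ ∧
      ‖(1 - A).det‖ ≤ ∏ k, (1 + r k) := by
  set hH := isHermitian_conjTranspose_mul_self A
  have hV := hH.eigenvectorUnitary.2
  rw [← det_one_sub_star_mul_mul hV]
  refine prod_one_sub_le_norm_det_one_sub_le (fun k => ⟨hr k ▸ Real.sqrt_nonneg _, hr1 k⟩) ?_
  rw [conjTranspose_mul_self_star_mul_mul hV, hH.star_eigenvectorUnitary_mul_mul]
  congr 1; ext k
  rw [Function.comp_apply, hr k]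
  exact_mod_cast (Real.sq_sqrt (eigenvalues_conjTranspose_mul_self_nonneg A k)).symm
end

section
/- Let Z be an n×n positive semidefinite matrix with eigenvalues r_1,...,r_n, and let U be an n×n unitary matrix such that I - UZ is nonsingular. Then ∏_{k=1}^n |1-r_k|/(1+r_k) ≤ |det(I - Z²)|/|det(I - UZ)|². -/
open Matrix
open scoped ComplexOrder

/-!
Diagonalize `Z = W diag(r) W*`. Then `det (1 - Z²) = ∏ (1 - r k ²)`, while
`det (1 - U Z) = det (1 - V diag(r))` with `V = W* U W` unitary. The `k`-th column of
`1 - V diag(r)` is `e k - r k • V e k`, of length at most `1 + r k`, so Hadamard's inequality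
gives `‖det (1 - U Z)‖ ≤ ∏ (1 + r k)`, and the claim follows on dividing.
-/

namespace OrthonormalBasis

variable {𝕜 E ι : Type*} [RCLike 𝕜] [NormedAddCommGroup E] [InnerProductSpace 𝕜 E]
  [Fintype ι] [DecidableEq ι]

/-- Hadamard's inequality. In the Gram–Schmidt basis `b` of `v`, the coordinate matrix of `v` is
triangular with diagonal `⟪b i, v i⟫`. -/
theorem norm_det_le_prod_norm_s4 (e : OrthonormalBasis ι 𝕜 E) (v : ι → E) :
    ‖e.toBasis.det v‖ ≤ ∏ i, ‖v i‖ := by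
  have := e.toBasis.finiteDimensional_of_finite
  -- Gram–Schmidt needs some linear order on `ι`; any one will do.
  let _ : LinearOrder ι := LinearOrder.lift' _ (Fintype.equivFin ι).injective
  let _ : LocallyFiniteOrderBot ι := .ofIic ι (fun a => {x | x ≤ a}) (by simp)
  set b := InnerProductSpace.gramSchmidtOrthonormalBasis
    (Module.finrank_eq_card_basis e.toBasis) v
  rw [e.toBasis.det.eq_smul_basis_det b.toBasis, AlternatingMap.smul_apply, smul_eq_mul, norm_mul,
    OrthonormalBasis.coe_toBasis b, e.det_to_matrix_orthonormalBasis b, one_mul,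
    InnerProductSpace.gramSchmidtOrthonormalBasis_det, norm_prod]
  refine Finset.prod_le_prod (fun _ _ => norm_nonneg _) fun i _ => ?_
  simpa [b.orthonormal.1 i] using norm_inner_le_norm (𝕜 := 𝕜) (b i) (v i)

end OrthonormalBasis

namespace Matrix

variable {𝕜 ι : Type*} [RCLike 𝕜] [Fintype ι] [DecidableEq ι]

theorem norm_det_le_prod_norm_col (A : Matrix ι ι 𝕜) :
    ‖A.det‖ ≤ ∏ j, ‖(WithLp.toLp 2 (A.col j) : EuclideanSpace 𝕜 ι)‖ := by
  convert (EuclideanSpace.basisFun ι 𝕜).norm_det_le_prod_norm_s4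
    fun j => WithLp.toLp 2 (A.col j)
  rw [Module.Basis.det_apply]
  rfl

theorem norm_col_of_mem_unitaryGroup {V : Matrix ι ι 𝕜} (hV : V ∈ unitaryGroup ι 𝕜) (j : ι) :
    ‖(WithLp.toLp 2 (V.col j) : EuclideanSpace 𝕜 ι)‖ = 1 := by
  have h := congrFun (congrFun (mem_unitaryGroup_iff'.mp hV) j) j
  rw [EuclideanSpace.norm_eq, Real.sqrt_eq_one]
  simp only [star_eq_conjTranspose, mul_apply, conjTranspose_apply, RCLike.star_def,
    RCLike.conj_mul, one_apply_eq] at h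
  exact_mod_cast h

theorem norm_det_one_sub_mul_diagonal_le {V : Matrix ι ι 𝕜} (hV : V ∈ unitaryGroup ι 𝕜)
    (d : ι → 𝕜) : ‖(1 - V * diagonal d).det‖ ≤ ∏ j, (1 + ‖d j‖) := by
  refine (norm_det_le_prod_norm_col _).trans <|
    Finset.prod_le_prod (fun _ _ => norm_nonneg _) fun j _ => ?_
  have hcol : (WithLp.toLp 2 ((1 - V * diagonal d).col j) : EuclideanSpace 𝕜 ι) =
      EuclideanSpace.single j 1 - d j • WithLp.toLp 2 (V.col j) := by
    ext i
    simp [col, one_apply, mul_comm, eq_comm]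
  calc _ ≤ ‖EuclideanSpace.single j (1 : 𝕜)‖ + ‖d j • WithLp.toLp 2 (V.col j)‖ :=
        hcol ▸ norm_sub_le _ _
    _ = 1 + ‖d j‖ := by
      rw [PiLp.norm_single, norm_smul, norm_col_of_mem_unitaryGroup hV, norm_one, mul_one]

namespace IsHermitian

variable {A : Matrix ι ι 𝕜}

theorem det_one_sub_mul_eq (hA : A.IsHermitian) (B : Matrix ι ι 𝕜) :
    (1 - B * A).det = (1 - (star (hA.eigenvectorUnitary : Matrix ι ι 𝕜) * B *
      (hA.eigenvectorUnitary : Matrix ι ι 𝕜)) *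
        diagonal (RCLike.ofReal ∘ hA.eigenvalues)).det := by
  conv_lhs => rw [hA.spectral_theorem, Unitary.conjStarAlgAut_apply]
  rw [← mul_assoc, ← mul_assoc, det_one_sub_mul_comm, ← mul_assoc, ← mul_assoc]

theorem det_one_sub_sq (hA : A.IsHermitian) :
    (1 - A ^ 2).det = ∏ i, (1 - (hA.eigenvalues i : 𝕜) ^ 2) := by
  rw [sq, hA.det_one_sub_mul_eq]
  have hdiag := hA.conjStarAlgAut_star_eigenvectorUnitary
  rw [Unitary.conjStarAlgAut_star_apply] at hdiag
  rw [hdiag, diagonal_mul_diagonal, ← diagonal_one, diagonal_sub, det_diagonal]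
  simp only [Function.comp_apply, sq]

end IsHermitian

namespace PosSemidef

variable {A : Matrix ι ι 𝕜}

theorem norm_det_one_sub_mul_le (hA : A.PosSemidef) {U : Matrix ι ι 𝕜}
    (hU : U ∈ unitaryGroup ι 𝕜) :
    ‖(1 - U * A).det‖ ≤ ∏ i, (1 + hA.1.eigenvalues i) := by
  set W := hA.1.eigenvectorUnitary
  have hV : star (W : Matrix ι ι 𝕜) * U * W ∈ unitaryGroup ι 𝕜 :=
    mul_mem (mul_mem (star W).2 hU) W.2
  rw [hA.1.det_one_sub_mul_eq]
  convert norm_det_one_sub_mul_diagonal_le hV _ using 3 with i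
  simp [abs_of_nonneg (hA.eigenvalues_nonneg i)]

theorem norm_det_one_sub_sq (hA : A.PosSemidef) :
    ‖(1 - A ^ 2).det‖ = ∏ i, |1 - hA.1.eigenvalues i| * (1 + hA.1.eigenvalues i) := by
  rw [hA.1.det_one_sub_sq, norm_prod]
  refine Finset.prod_congr rfl fun i _ => ?_
  set μ := hA.1.eigenvalues i
  have hμ : 0 ≤ μ := hA.eigenvalues_nonneg i
  rw [← RCLike.ofReal_pow, ← RCLike.ofReal_one, ← RCLike.ofReal_sub, RCLike.norm_ofReal,
    show 1 - μ ^ 2 = (1 - μ) * (1 + μ) by ring, abs_mul,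
    abs_of_nonneg (by linarith : 0 ≤ 1 + μ)]

end PosSemidef

end Matrix

/-- For a positive semidefinite `Z` with eigenvalues `r k` and a unitary `U` with `I - UZ`
nonsingular, `∏ |1 - r k|/(1 + r k) ≤ |det(I - Z²)|/|det(I - UZ)|²`. -/
theorem harnack_lower_psd (n : ℕ) (Z : Matrix (Fin n) (Fin n) ℂ) (hZ : Z.PosSemidef)
    (r : Fin n → ℝ) (hr : ∀ k, r k = hZ.1.eigenvalues k)
    (U : Matrix (Fin n) (Fin n) ℂ) (hU : U ∈ Matrix.unitaryGroup (Fin n) ℂ)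
    (hdet : (1 - U * Z).det ≠ 0) :
    ∏ k, |1 - r k| / (1 + r k)
      ≤ ‖(1 - Z ^ 2).det‖ / (‖(1 - U * Z).det‖) ^ 2 := by
  replace hr : r = hZ.1.eigenvalues := funext hr
  have hr0 : ∀ k, 0 ≤ r k := hr ▸ hZ.eigenvalues_nonneg
  have hUZ : ‖(1 - U * Z).det‖ ≤ ∏ k, (1 + r k) := hr ▸ hZ.norm_det_one_sub_mul_le hU
  have hB : 0 < ∏ k, (1 + r k) := Finset.prod_pos fun k _ => by linarith [hr0 k]
  have hpos : 0 < ‖(1 - U * Z).det‖ := norm_pos_iff.mpr hdet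
  rw [hZ.norm_det_one_sub_sq, ← hr, Finset.prod_mul_distrib, Finset.prod_div_distrib]
  calc (∏ k, |1 - r k|) / ∏ k, (1 + r k)
      = (∏ k, |1 - r k|) * (∏ k, (1 + r k)) / (∏ k, (1 + r k)) ^ 2 := by
        field_simp
    _ ≤ (∏ k, |1 - r k|) * (∏ k, (1 + r k)) / ‖(1 - U * Z).det‖ ^ 2 := by
        gcongr
end

section
/- Let Z be an n×n positive definite matrix with all eigenvalues r_1,...,r_n in (0,1), and let U be a unitary matrix with U ≠ I. Then det(I - Z²)/|det(I - UZ)|² < ∏_{k=1}^n (1+r_k)/(1-r_k), i.e., the inequality is strict. -/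
open Matrix BigOperators
open scoped ComplexOrder

/-!
Write `Z = W * W` with `W` Hermitian and invertible, and put `S = W U W`, so that
`det (1 - U Z) = det (1 - S)`. For unitary `U` one has `ℜ (1 - U) = ½ (1 - U)ᴴ (1 - U)`, so the
Hermitian part of `1 - S` is `(1 - Z) + W ℜ(1 - U) W`: the positive definite matrix `1 - Z` plus a
positive semidefinite matrix, nonzero because `U ≠ 1`. Congruence by the square root of a positive
definite `P` reduces determinants of `P + X` to those of `1 + T`, which are read off from the
eigenvalues of `T`; this gives `det P < |det (P + X)|` for `X` positive semidefinite and
nonzero, and `det H ≤ |det (H + i K)|` for `K` Hermitian. Hence `det (1 - Z) < |det (1 - U Z)|`,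
and the bound follows from `det (1 - Z²) = ∏ (1 - r k) (1 + r k)`.
-/

open ComplexStarModule

section StarAlgebra

variable {A : Type*} [Ring A] [StarRing A]

lemma realPart_one_sub_of_mem_unitary [Module ℂ A] [StarModule ℂ A] {u : A}
    (hu : u ∈ unitary A) : (ℜ (1 - u) : A) = (2⁻¹ : ℝ) • (star (1 - u) * (1 - u)) := by
  rw [realPart_apply_coe]
  congr 1
  simp only [star_sub, star_one, sub_mul, mul_sub, one_mul, mul_one,
    Unitary.star_mul_self_of_mem hu]
  abel

lemma IsSelfAdjoint.realPart_conjugate_self [Algebra ℂ A] [StarModule ℂ A] {w : A}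
    (hw : IsSelfAdjoint w) (x : A) : (ℜ (w * x * w) : A) = w * ℜ x * w := by
  rw [realPart_apply_coe, realPart_apply_coe, star_mul, star_mul, hw.star_eq, mul_smul_comm,
    smul_mul_assoc, mul_add, add_mul]
  simp only [mul_assoc]

end StarAlgebra

namespace Matrix

variable {𝕜 n : Type*} [RCLike 𝕜] [Fintype n] [DecidableEq n]

lemma IsHermitian.one_add_smul_eq_conjStarAlgAut {A : Matrix n n 𝕜} (hA : A.IsHermitian)
    (c : 𝕜) : 1 + c • A = Unitary.conjStarAlgAut 𝕜 _ hA.eigenvectorUnitary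
      (diagonal fun i => 1 + c * hA.eigenvalues i) := by
  conv_lhs => rw [hA.spectral_theorem]
  rw [← map_smul, ← map_one (Unitary.conjStarAlgAut 𝕜 _ hA.eigenvectorUnitary), ← map_add,
    ← diagonal_one, ← diagonal_smul, ← diagonal_add]
  rfl

lemma IsHermitian.det_one_add_smul {A : Matrix n n 𝕜} (hA : A.IsHermitian) (c : 𝕜) :
    (1 + c • A).det = ∏ i, (1 + c * hA.eigenvalues i) := by
  rw [hA.one_add_smul_eq_conjStarAlgAut, Unitary.conjStarAlgAut_apply, det_mul_comm,
    ← mul_assoc, Unitary.coe_star_mul_self, one_mul, det_diagonal]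

lemma IsHermitian.posDef_one_add_smul {A : Matrix n n 𝕜} (hA : A.IsHermitian) {c : ℝ}
    (hc : ∀ i, 0 < 1 + c * hA.eigenvalues i) : (1 + (c : 𝕜) • A).PosDef := by
  rw [hA.one_add_smul_eq_conjStarAlgAut, Unitary.conjStarAlgAut_apply,
    IsUnit.posDef_star_right_conjugate_iff Unitary.isUnit_coe, posDef_diagonal_iff]
  intro i
  exact_mod_cast hc i

lemma PosSemidef.one_lt_norm_det_one_add {T : Matrix n n 𝕜} (hT : T.PosSemidef) (hT0 : T ≠ 0) :
    1 < ‖(1 + T).det‖ := by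
  obtain ⟨j, hj⟩ : ∃ j, hT.1.eigenvalues j ≠ 0 := by
    by_contra! h
    exact hT0 (hT.1.eigenvalues_eq_zero_iff.mp (funext h))
  have hnorm (i : n) : ‖1 + (hT.1.eigenvalues i : 𝕜)‖ = 1 + hT.1.eigenvalues i := by
    rw [← RCLike.ofReal_one, ← RCLike.ofReal_add, RCLike.norm_of_nonneg]
    linarith [hT.eigenvalues_nonneg i]
  have hdet := hT.1.det_one_add_smul 1
  simp only [one_smul, one_mul] at hdet
  rw [hdet, norm_prod, ← Finset.prod_const_one]
  refine Finset.prod_lt_prod (fun _ _ => one_pos) (fun i _ => ?_) ⟨j, Finset.mem_univ j, ?_⟩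
  · rw [hnorm]
    linarith [hT.eigenvalues_nonneg i]
  · rw [hnorm]
    linarith [(hT.eigenvalues_nonneg j).lt_of_ne' hj]

lemma IsHermitian.one_le_norm_det_one_add_I_smul {T : Matrix n n ℂ} (hT : T.IsHermitian) :
    1 ≤ ‖(1 + Complex.I • T).det‖ := by
  rw [hT.det_one_add_smul, norm_prod]
  refine Finset.one_le_prod fun i _ => ?_
  calc (1 : ℝ) = |(1 + Complex.I * hT.eigenvalues i).re| := by simp
    _ ≤ _ := Complex.abs_re_le_norm _

open scoped MatrixOrder in
lemma PosDef.exists_isHermitian_mul_self_eq {P : Matrix n n 𝕜} (hP : P.PosDef) :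
    ∃ W : Matrix n n 𝕜, W.IsHermitian ∧ IsUnit W.det ∧ W * W = P :=
  ⟨CFC.sqrt P, (CFC.sqrt_nonneg P).posSemidef.1,
    (isUnit_iff_isUnit_det _).mp ((CFC.isUnit_sqrt_iff P hP.posSemidef.nonneg).mpr hP.isUnit),
    CFC.sqrt_mul_sqrt_self P hP.posSemidef.nonneg⟩

lemma norm_det_mul_self_add {W : Matrix n n 𝕜} (hW : IsUnit W.det) (X : Matrix n n 𝕜) :
    ‖(W * W + X).det‖ = ‖(W * W).det‖ * ‖(1 + W⁻¹ * X * W⁻¹).det‖ := by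
  have hWX : W * W + X = W * (1 + W⁻¹ * X * W⁻¹) * W := by
    rw [mul_add, add_mul, mul_one, ← mul_assoc, ← mul_assoc, mul_nonsing_inv _ hW, one_mul,
      mul_assoc, nonsing_inv_mul _ hW, mul_one]
  rw [hWX, det_mul, det_mul, det_mul, norm_mul, norm_mul, norm_mul]
  ring

lemma PosDef.norm_det_lt_norm_det_add {P X : Matrix n n 𝕜} (hP : P.PosDef) (hX : X.PosSemidef)
    (hX0 : X ≠ 0) : ‖P.det‖ < ‖(P + X).det‖ := by
  obtain ⟨W, hWh, hW, rfl⟩ := hP.exists_isHermitian_mul_self_eq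
  have hT : (W⁻¹ * X * W⁻¹).PosSemidef := by
    simpa only [hWh.inv.eq] using hX.mul_mul_conjTranspose_same W⁻¹
  have hT0 : W⁻¹ * X * W⁻¹ ≠ 0 := by
    contrapose! hX0
    rw [← mul_nonsing_inv_cancel_left (A := W) X hW,
      ← nonsing_inv_mul_cancel_right (A := W) (W⁻¹ * X) hW, hX0, zero_mul, mul_zero]
  rw [norm_det_mul_self_add hW]
  exact lt_mul_of_one_lt_right (norm_pos_iff.mpr hP.det_pos.ne') (hT.one_lt_norm_det_one_add hT0)

lemma PosDef.norm_det_le_norm_det_add_I_smul {H K : Matrix n n ℂ} (hH : H.PosDef)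
    (hK : K.IsHermitian) : ‖H.det‖ ≤ ‖(H + Complex.I • K).det‖ := by
  obtain ⟨W, hWh, hW, rfl⟩ := hH.exists_isHermitian_mul_self_eq
  have hT : (W⁻¹ * K * W⁻¹).IsHermitian := by
    simpa only [hWh.inv.eq] using isHermitian_mul_mul_conjTranspose W⁻¹ hK
  rw [norm_det_mul_self_add hW, mul_smul_comm, smul_mul_assoc]
  exact le_mul_of_one_le_right (norm_nonneg _) hT.one_le_norm_det_one_add_I_smul

lemma norm_det_one_sub_lt_norm_det_one_sub_mul {Z U : Matrix n n ℂ} (hZ : Z.PosDef)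
    (h1Z : (1 - Z).PosDef) (hU : U ∈ unitaryGroup n ℂ) (hU1 : U ≠ 1) :
    ‖(1 - Z).det‖ < ‖(1 - U * Z).det‖ := by
  obtain ⟨W, hWh, hW, rfl⟩ := hZ.exists_isHermitian_mul_self_eq
  have hWu : IsUnit W := (isUnit_iff_isUnit_det W).mpr hW
  set R : Matrix n n ℂ := (ℜ (1 - U) : Matrix n n ℂ) with hRdef
  have hR : R.PosSemidef := by
    rw [hRdef, realPart_one_sub_of_mem_unitary hU]
    exact (posSemidef_conjTranspose_mul_self _).smul (by norm_num)
  have hR0 : R ≠ 0 := by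
    rw [hRdef, realPart_one_sub_of_mem_unitary hU, smul_ne_zero_iff, star_eq_conjTranspose]
    refine ⟨by norm_num, ?_⟩
    rw [Ne, conjTranspose_mul_self_eq_zero, sub_eq_zero]
    exact hU1.symm
  have hQ : (W * R * W).PosSemidef := by
    simpa only [hWh.eq] using hR.mul_mul_conjTranspose_same W
  have hQ0 : W * R * W ≠ 0 := by
    rwa [Ne, hWu.mul_left_eq_zero, hWu.mul_right_eq_zero]
  have hRe : (ℜ (1 - W * U * W) : Matrix n n ℂ) = (1 - W * W) + W * R * W := by
    have hsplit : 1 - W * U * W = (1 - W * W) + W * (1 - U) * W := by noncomm_ring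
    rw [hsplit, map_add, AddSubgroup.coe_add, h1Z.1.isSelfAdjoint.coe_realPart,
      hWh.isSelfAdjoint.realPart_conjugate_self]
  calc ‖(1 - W * W).det‖ < ‖((1 - W * W) + W * R * W).det‖ :=
        h1Z.norm_det_lt_norm_det_add hQ hQ0
    _ ≤ ‖(ℜ (1 - W * U * W) + Complex.I • ℑ (1 - W * U * W) : Matrix n n ℂ).det‖ := by
        rw [hRe]
        exact (h1Z.add_posSemidef hQ).norm_det_le_norm_det_add_I_smul (ℑ _).2
    _ = ‖(1 - U * (W * W)).det‖ := by
        rw [realPart_add_I_smul_imaginaryPart, mul_assoc, det_one_sub_mul_comm, mul_assoc]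

end Matrix

/-- For a positive definite `Z` with eigenvalues `r k ∈ (0,1)` and a unitary `U ≠ I`,
the Harnack-type upper bound is strict:
`det(I - Z²)/|det(I - UZ)|² < ∏ (1 + r k)/(1 - r k)`. -/
theorem harnack_upper_strict (n : ℕ) (Z : Matrix (Fin n) (Fin n) ℂ) (hZ : Z.PosDef)
    (r : Fin n → ℝ) (hr : ∀ k, r k = hZ.1.eigenvalues k)
    (hr0 : ∀ k, 0 < r k) (hr1 : ∀ k, r k < 1)
    (U : Matrix (Fin n) (Fin n) ℂ) (hU : U ∈ Matrix.unitaryGroup (Fin n) ℂ) (hU1 : U ≠ 1) :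
    ((1 - Z ^ 2).det).re / (‖(1 - U * Z).det‖) ^ 2
      < ∏ k, (1 + r k) / (1 - r k) := by
  have hdet (c : ℝ) : (1 + (c : ℂ) • Z).det = ((∏ k, (1 + c * r k) : ℝ) : ℂ) := by
    rw [hZ.isHermitian.det_one_add_smul]
    simp [hr]
  have hsub : 1 - Z = 1 + ((-1 : ℝ) : ℂ) • Z := by simp [sub_eq_add_neg]
  have hdet_sub : (1 - Z).det = ((∏ k, (1 - r k) : ℝ) : ℂ) := by
    rw [hsub, hdet]
    simp [sub_eq_add_neg]
  have hdet_add : (1 + Z).det = ((∏ k, (1 + r k) : ℝ) : ℂ) := by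
    simpa using hdet 1
  have h1Z : (1 - Z).PosDef := by
    rw [hsub]
    exact hZ.isHermitian.posDef_one_add_smul (c := -1) fun k => by rw [← hr k]; linarith [hr1 k]
  have hlt := norm_det_one_sub_lt_norm_det_one_sub_mul hZ h1Z hU hU1
  have ha : 0 < ∏ k, (1 - r k) := Finset.prod_pos fun k _ => by linarith [hr1 k]
  have hb : 0 < ∏ k, (1 + r k) := Finset.prod_pos fun k _ => by linarith [hr0 k]
  rw [hdet_sub, Complex.norm_real, Real.norm_of_nonneg ha.le] at hlt
  rw [show 1 - Z ^ 2 = (1 - Z) * (1 + Z) by noncomm_ring, det_mul, hdet_sub, hdet_add,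
    ← Complex.ofReal_mul, Complex.ofReal_re, Finset.prod_div_distrib]
  calc _ < (∏ k, (1 - r k)) * (∏ k, (1 + r k)) / (∏ k, (1 - r k)) ^ 2 :=
        div_lt_div_of_pos_left (by positivity) (by positivity)
          (pow_lt_pow_left₀ hlt ha.le two_ne_zero)
    _ = _ := by field_simp
end

section
/- Let x = (x_1,...,x_n) and y = (y_1,...,y_n) be positive vectors with x log-majorized by y (i.e., the decreasing rearrangements satisfy ∏_{k=1}^ℓ x_k^↓ ≤ ∏_{k=1}^ℓ y_k^↓ for ℓ < n and ∏_{k=1}^n x_k = ∏_{k=1}^n y_k). Then the vector (1+x_1,...,1+x_n) is weakly log-majorized by (1+y_1,...,1+y_n); in particular ∏_{k=1}^n (1+x_k) ≤ ∏_{k=1}^n (1+y_k). -/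
/-!
Take logarithms. The function `φ t = log (1 + exp t)` is increasing and convex, so its tangent
slopes `x_k / (1 + x_k)` at the decreasing rearrangement of `log x` are nonnegative and
decreasing, and `φ (log y_k) - φ (log x_k)` is at least the slope times `log y_k - log x_k`.
The partial sums of `log y_k - log x_k` are nonnegative by hypothesis, so Abel summation against
the nonnegative decreasing slopes keeps every partial sum nonnegative (Tomić–Weyl).
-/

open Finset Real

/-- `x` is log-majorized by `y`: for decreasing rearrangements (given by permutations
`σ`, `τ`), the partial products of `x` are dominated by those of `y`, with equality of the
full products. -/
def IsLogMaj {n : ℕ} (x y : Fin n → ℝ) : Prop :=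
  ∃ σ τ : Equiv.Perm (Fin n), Antitone (x ∘ σ) ∧ Antitone (y ∘ τ) ∧
    (∀ l : ℕ, ∏ k ∈ Finset.univ.filter (fun k : Fin n => (k : ℕ) < l), x (σ k)
        ≤ ∏ k ∈ Finset.univ.filter (fun k : Fin n => (k : ℕ) < l), y (τ k)) ∧
    ∏ k, x k = ∏ k, y k

/-- `x` is weakly log-majorized by `y`: the partial products of the decreasing
rearrangement of `x` are dominated by those of `y`. -/
def IsWeakLogMaj {n : ℕ} (x y : Fin n → ℝ) : Prop :=
  ∃ σ τ : Equiv.Perm (Fin n), Antitone (x ∘ σ) ∧ Antitone (y ∘ τ) ∧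
    (∀ l : ℕ, ∏ k ∈ Finset.univ.filter (fun k : Fin n => (k : ℕ) < l), x (σ k)
        ≤ ∏ k ∈ Finset.univ.filter (fun k : Fin n => (k : ℕ) < l), y (τ k))

/-- The tangent inequality for the convex function `t ↦ log (1 + exp t)`, at `t = log u`. -/
lemma div_one_add_mul_log_sub_log_le {u v : ℝ} (hu : 0 < u) (hv : 0 < v) :
    u / (1 + u) * (log v - log u) ≤ log (1 + v) - log (1 + u) := by
  have hu1 : 0 < 1 + u := by linarith
  rw [← log_div hv.ne' hu.ne', ← log_div (by linarith) hu1.ne']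
  have hconc := strictConcaveOn_log_Ioi.concaveOn.2 (Set.mem_Ioi.2 (div_pos hv hu))
    (Set.mem_Ioi.2 one_pos) (div_nonneg hu.le hu1.le) (div_nonneg zero_le_one hu1.le)
    (by field_simp; ring)
  have hmix : u / (1 + u) * (v / u) + 1 / (1 + u) = (1 + v) / (1 + u) := by
    field_simp
    ring
  simp only [smul_eq_mul, log_one, mul_zero, add_zero, mul_one] at hconc
  rwa [hmix] at hconc

section InitialSegment

variable {n : ℕ}

lemma filter_val_lt_succ {l : ℕ} (h : l < n) :
    univ.filter (fun k : Fin n => (k : ℕ) < l + 1)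
      = insert ⟨l, h⟩ (univ.filter (fun k : Fin n => (k : ℕ) < l)) := by
  ext k
  simp only [mem_filter, mem_univ, true_and, mem_insert, Fin.ext_iff]
  omega

lemma filter_val_lt_of_le {l : ℕ} (h : n ≤ l) :
    univ.filter (fun k : Fin n => (k : ℕ) < l) = univ :=
  filter_true_of_mem fun k _ => k.is_lt.trans_le h

/-- Abel's inequality. -/
lemma sum_filter_val_lt_mul_nonneg (c d : Fin n → ℝ) (hc : Antitone c) (hc0 : ∀ k, 0 ≤ c k)
    (hd : ∀ l, 0 ≤ ∑ k ∈ univ.filter (fun k : Fin n => (k : ℕ) < l), d k) (l : ℕ) :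
    0 ≤ ∑ k ∈ univ.filter (fun k : Fin n => (k : ℕ) < l), c k * d k := by
  suffices key : ∀ l, ∀ m, 0 ≤ m → (∀ k ∈ univ.filter (fun k : Fin n => (k : ℕ) < l), m ≤ c k) →
      m * ∑ k ∈ univ.filter (fun k : Fin n => (k : ℕ) < l), d k
        ≤ ∑ k ∈ univ.filter (fun k : Fin n => (k : ℕ) < l), c k * d k by
    simpa using key l 0 le_rfl fun k _ => hc0 k
  intro l
  induction l with
  | zero => simp
  | succ l ih =>
    intro m hm hmc
    rcases lt_or_ge l n with hl | hl
    · set p : Fin n := ⟨l, hl⟩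
      have hp : p ∉ univ.filter (fun k : Fin n => (k : ℕ) < l) := by simp [p]
      rw [filter_val_lt_succ hl] at hmc ⊢
      have hmp : m ≤ c p := hmc p (mem_insert_self _ _)
      have hsum := hd (l + 1)
      rw [filter_val_lt_succ hl, sum_insert hp] at hsum
      rw [sum_insert hp, sum_insert hp]
      have hih := ih (c p) (hc0 p) fun k hk => hc (Fin.mk_le_mk.2 (mem_filter.1 hk).2.le)
      linarith [mul_le_mul_of_nonneg_right hmp hsum]
    · rw [filter_val_lt_of_le (hl.trans l.le_succ)] at hmc ⊢
      rw [filter_val_lt_of_le hl] at ih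
      exact ih m hm hmc

lemma prod_filter_val_lt_one_add_le (a b : Fin n → ℝ) (ha : ∀ k, 0 < a k) (hb : ∀ k, 0 < b k)
    (haa : Antitone a)
    (hab : ∀ l, ∏ k ∈ univ.filter (fun k : Fin n => (k : ℕ) < l), a k
        ≤ ∏ k ∈ univ.filter (fun k : Fin n => (k : ℕ) < l), b k) (l : ℕ) :
    ∏ k ∈ univ.filter (fun k : Fin n => (k : ℕ) < l), (1 + a k)
      ≤ ∏ k ∈ univ.filter (fun k : Fin n => (k : ℕ) < l), (1 + b k) := by
  have ha1 : ∀ k, 0 < 1 + a k := fun k => by linarith [ha k]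
  have hb1 : ∀ k, 0 < 1 + b k := fun k => by linarith [hb k]
  have hslope : Antitone fun k => a k / (1 + a k) := by
    intro i j hij
    rw [div_le_div_iff₀ (ha1 j) (ha1 i)]
    linarith [haa hij]
  have hlog :
      ∀ l, 0 ≤ ∑ k ∈ univ.filter (fun k : Fin n => (k : ℕ) < l), (log (b k) - log (a k)) := by
    intro l
    rw [sum_sub_distrib, ← log_prod fun k _ => (hb k).ne', ← log_prod fun k _ => (ha k).ne',
      sub_nonneg]
    exact log_le_log (prod_pos fun k _ => ha k) (hab l)
  have habel := sum_filter_val_lt_mul_nonneg _ _ hslope (fun k => (div_pos (ha k) (ha1 k)).le)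
    hlog l
  rw [← log_le_log_iff (prod_pos fun k _ => ha1 k) (prod_pos fun k _ => hb1 k),
    log_prod fun k _ => (ha1 k).ne', log_prod fun k _ => (hb1 k).ne', ← sub_nonneg,
    ← sum_sub_distrib]
  exact habel.trans (sum_le_sum fun k _ => div_one_add_mul_log_sub_log_le (ha k) (hb k))

end InitialSegment

/-- If the positive vectors satisfy `x ≺_log y`, then `(1+x) ≺_wlog (1+y)`;
in particular `∏ (1 + x k) ≤ ∏ (1 + y k)`. -/
theorem one_add_weakLogMaj_of_logMaj {n : ℕ} (x y : Fin n → ℝ)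
    (hx : ∀ k, 0 < x k) (hy : ∀ k, 0 < y k) (hmaj : IsLogMaj x y) :
    IsWeakLogMaj (fun k => 1 + x k) (fun k => 1 + y k) ∧
      ∏ k, (1 + x k) ≤ ∏ k, (1 + y k) := by
  obtain ⟨σ, τ, hxσ, hyτ, hpart, -⟩ := hmaj
  have hshift := prod_filter_val_lt_one_add_le (x ∘ σ) (y ∘ τ) (fun k => hx _) (fun k => hy _)
    hxσ hpart
  refine ⟨⟨σ, τ, hxσ.const_add 1, hyτ.const_add 1, hshift⟩, ?_⟩
  have hfull := hshift n
  rw [filter_val_lt_of_le le_rfl] at hfull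
  calc ∏ k, (1 + x k) = ∏ k, (1 + x (σ k)) := (Equiv.prod_comp σ fun k => 1 + x k).symm
    _ ≤ ∏ k, (1 + y (τ k)) := hfull
    _ = ∏ k, (1 + y k) := Equiv.prod_comp τ fun k => 1 + y k
end

section
/- Let x and y be positive vectors in ℝⁿ with x log-majorized by y, and suppose y is not a permutation of x (the multisets {x_k} and {y_k} differ). Then ∏_{k=1}^n (1+x_k) < ∏_{k=1}^n (1+y_k) strictly. -/
/-!
Take logarithms: for positive vectors, `x ≺_log y` says that `a = log x↓` is majorized by
`b = log y↓`, and `∏ (1 + x k) = exp (∑ φ (a k))` with `φ t = log (1 + exp t)` strictly convex.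
Karamata's inequality then follows in tangent form: `φ (b k) - φ (a k) ≥ φ' (a k) * (b k - a k)`,
strictly where `a k ≠ b k`, and since `φ' (a k)` decreases in `k` while the partial sums of
`b - a` are nonnegative with total `0`, Abel summation makes `∑ φ' (a k) * (b k - a k) ≥ 0`.
-/

open BigOperators

open Finset Real

theorem Finset.sum_range_mul_nonneg_of_antitoneOn {R : Type*} [CommRing R] [PartialOrder R]
    [IsOrderedRing R] {c d : ℕ → R} {n : ℕ} (hc : AntitoneOn c (Set.Iio n))
    (hd : ∀ l ≤ n, 0 ≤ ∑ i ∈ range l, d i) (hdn : ∑ i ∈ range n, d i = 0) :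
    0 ≤ ∑ i ∈ range n, c i * d i := by
  have hparts := sum_range_by_parts c d n
  simp only [smul_eq_mul] at hparts
  rw [hparts, hdn, mul_zero, zero_sub, neg_nonneg]
  refine sum_nonpos fun i hi => mul_nonpos_of_nonpos_of_nonneg ?_ (hd _ (by grind))
  exact sub_nonpos.2 (hc (by grind) (by grind) (Nat.le_succ i))

theorem Fin.sum_filter_val_lt_eq_sum_range {M : Type*} [AddCommMonoid M] {n l : ℕ} (hl : l ≤ n)
    (d : Fin n → M) :
    ∑ k ∈ univ.filter (fun k : Fin n => (k : ℕ) < l), d k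
      = ∑ i ∈ range l, if h : i < n then d ⟨i, h⟩ else 0 := by
  rw [sum_filter, sum_fin_eq_sum_range]
  apply sum_congr_of_eq_on_inter <;> grind

theorem Fin.sum_mul_nonneg_of_antitone {R : Type*} [CommRing R] [PartialOrder R]
    [IsOrderedRing R] {n : ℕ} {c d : Fin n → R} (hc : Antitone c)
    (hd : ∀ l : ℕ, 0 ≤ ∑ k ∈ univ.filter (fun k : Fin n => (k : ℕ) < l), d k)
    (hdn : ∑ k, d k = 0) :
    0 ≤ ∑ k, c k * d k := by
  set c' : ℕ → R := fun i => if h : i < n then c ⟨i, h⟩ else 0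
  set d' : ℕ → R := fun i => if h : i < n then d ⟨i, h⟩ else 0
  have hsum : ∑ k, c k * d k = ∑ i ∈ range n, c' i * d' i := by
    rw [← Fin.sum_univ_eq_sum_range]
    simp [c', d']
  have hpartial (l : ℕ) (hl : l ≤ n) : ∑ i ∈ range l, d' i =
      ∑ k ∈ univ.filter (fun k : Fin n => (k : ℕ) < l), d k :=
    (Fin.sum_filter_val_lt_eq_sum_range hl d).symm
  rw [hsum]
  refine sum_range_mul_nonneg_of_antitoneOn ?_ (fun l hl => hpartial l hl ▸ hd l) ?_
  · intro i hi j hj hij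
    simp only [Set.mem_Iio] at hi hj
    simp only [c', dif_pos hi, dif_pos hj]
    exact hc (Fin.mk_le_mk.2 hij)
  · rw [hpartial n le_rfl, ← hdn]
    exact sum_congr (filter_true_of_mem fun k _ => k.isLt) fun _ _ => rfl

theorem StrictConvexOn.deriv_mul_sub_lt {S : Set ℝ} {f : ℝ → ℝ} (hf : StrictConvexOn ℝ S f)
    {x y : ℝ} (hx : x ∈ S) (hy : y ∈ S) (hxy : x ≠ y) (hfd : DifferentiableAt ℝ f x) :
    deriv f x * (y - x) < f y - f x := by
  rcases hxy.lt_or_gt with h | h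
  · have := hf.deriv_lt_slope hx hy h hfd
    rwa [slope_def_field, lt_div_iff₀ (sub_pos.2 h)] at this
  · have := hf.slope_lt_deriv hy hx h hfd
    rw [slope_def_field, div_lt_iff₀ (sub_pos.2 h)] at this
    linarith

theorem StrictConvexOn.sum_lt_sum_of_antitone_of_partialSums_le {S : Set ℝ} {f : ℝ → ℝ}
    (hf : StrictConvexOn ℝ S f) (hfd : ∀ x ∈ S, DifferentiableAt ℝ f x) {n : ℕ}
    {a b : Fin n → ℝ} (haS : ∀ k, a k ∈ S) (hbS : ∀ k, b k ∈ S) (ha : Antitone a)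
    (hab : ∀ l : ℕ, ∑ k ∈ univ.filter (fun k : Fin n => (k : ℕ) < l), a k
      ≤ ∑ k ∈ univ.filter (fun k : Fin n => (k : ℕ) < l), b k)
    (hsum : ∑ k, a k = ∑ k, b k) (hne : a ≠ b) :
    ∑ k, f (a k) < ∑ k, f (b k) := by
  have hc : Antitone fun k => deriv f (a k) := fun i j hij =>
    (hf.strictMonoOn_deriv hfd).monotoneOn (haS j) (haS i) (ha hij)
  have habel : 0 ≤ ∑ k, deriv f (a k) * (b k - a k) := by
    refine Fin.sum_mul_nonneg_of_antitone hc (fun l => ?_) ?_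
    · rw [sum_sub_distrib, sub_nonneg]
      exact hab l
    · rw [sum_sub_distrib, hsum, sub_self]
  obtain ⟨k₀, hk₀⟩ := Function.ne_iff.1 hne
  have htangent : ∑ k, deriv f (a k) * (b k - a k) < ∑ k, (f (b k) - f (a k)) := by
    refine sum_lt_sum (fun k _ => ?_) ⟨k₀, mem_univ _, ?_⟩
    · rcases eq_or_ne (a k) (b k) with h | h
      · simp [h]
      · exact (hf.deriv_mul_sub_lt (haS k) (hbS k) h (hfd _ (haS k))).le
    · exact hf.deriv_mul_sub_lt (haS k₀) (hbS k₀) hk₀ (hfd _ (haS k₀))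
  rw [sum_sub_distrib] at htangent
  linarith

theorem Real.hasDerivAt_log_one_add_exp (t : ℝ) :
    HasDerivAt (fun t => log (1 + exp t)) (sigmoid t) t := by
  convert ((hasDerivAt_exp t).const_add 1).log (by positivity) using 1
  rw [sigmoid_def, exp_neg]
  field_simp
  ring

theorem Real.strictConvexOn_log_one_add_exp :
    StrictConvexOn ℝ Set.univ fun t => log (1 + exp t) := by
  refine StrictMono.strictConvexOn_univ_of_deriv (continuous_iff_continuousAt.2 fun t =>
    (hasDerivAt_log_one_add_exp t).continuousAt) ?_
  rw [funext fun t => (hasDerivAt_log_one_add_exp t).deriv]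
  exact sigmoid_strictMono

theorem Equiv.Perm.map_univ_val_comp {α β : Type*} [Fintype α] (σ : Equiv.Perm α) (f : α → β) :
    univ.val.map (f ∘ σ) = univ.val.map f := by
  rw [← Multiset.map_map, Multiset.map_univ_val_equiv]

theorem IsLogMaj.sum_comp_log_lt {n : ℕ} {x y : Fin n → ℝ} (hmaj : IsLogMaj x y)
    (hx : ∀ k, 0 < x k) (hy : ∀ k, 0 < y k) (hne : univ.val.map x ≠ univ.val.map y)
    {f : ℝ → ℝ} (hf : StrictConvexOn ℝ Set.univ f) (hfd : Differentiable ℝ f) :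
    ∑ k, f (log (x k)) < ∑ k, f (log (y k)) := by
  obtain ⟨σ, τ, hσ, -, hpart, hprod⟩ := hmaj
  have hlog_prod {v : Fin n → ℝ} (hv : ∀ k, 0 < v k) (s : Finset (Fin n)) :
      log (∏ k ∈ s, v k) = ∑ k ∈ s, log (v k) :=
    log_prod fun k _ => (hv k).ne'
  have hlt := hf.sum_lt_sum_of_antitone_of_partialSums_le (fun t _ => hfd t)
    (fun _ => Set.mem_univ _) (fun _ => Set.mem_univ _)
    (a := fun k => log (x (σ k))) (b := fun k => log (y (τ k)))
    (fun i j hij => log_le_log (hx _) (hσ hij))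
    (fun l => by
      rw [← hlog_prod fun k => hx (σ k), ← hlog_prod fun k => hy (τ k)]
      exact log_le_log (prod_pos fun k _ => hx _) (hpart l))
    (by rw [← hlog_prod fun k => hx (σ k), ← hlog_prod fun k => hy (τ k), Equiv.prod_comp,
      Equiv.prod_comp, hprod])
    (fun h => hne <| by
      have hxy : x ∘ σ = y ∘ τ := funext fun k => log_injOn_pos (hx _) (hy _) (congrFun h k)
      rw [← σ.map_univ_val_comp, hxy, τ.map_univ_val_comp])
  rwa [Equiv.sum_comp σ (fun k => f (log (x k))), Equiv.sum_comp τ (fun k => f (log (y k)))]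
    at hlt

/-- If the positive vectors satisfy `x ≺_log y` and `y` is not a permutation of `x`,
then `∏ (1 + x k) < ∏ (1 + y k)` strictly. -/
theorem prod_one_add_lt_of_logMaj {n : ℕ} (x y : Fin n → ℝ)
    (hx : ∀ k, 0 < x k) (hy : ∀ k, 0 < y k) (hmaj : IsLogMaj x y)
    (hne : Finset.univ.val.map x ≠ Finset.univ.val.map y) :
    ∏ k, (1 + x k) < ∏ k, (1 + y k) := by
  have hx' (k : Fin n) : 0 < 1 + x k := by linarith [hx k]
  have hy' (k : Fin n) : 0 < 1 + y k := by linarith [hy k]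
  have hlt := hmaj.sum_comp_log_lt hx hy hne strictConvexOn_log_one_add_exp
    fun t => (hasDerivAt_log_one_add_exp t).differentiableAt
  simp only [exp_log (hx _), exp_log (hy _)] at hlt
  rw [← log_prod fun k _ => (hx' k).ne', ← log_prod fun k _ => (hy' k).ne'] at hlt
  exact (log_lt_log_iff (prod_pos fun k _ => hx' k) (prod_pos fun k _ => hy' k)).1 hlt
end

section
/- Let Z_1,...,Z_m be n×n positive semidefinite matrices where Z_i has eigenvalues r_{i1},...,r_{in} all in [0,1). Let U be unitary and w_1,...,w_m > 0 with Σ w_i = 1. Then det(I - (Σ_i w_i Z_i)²)/|det(I - U Σ_i w_i Z_i)|² ≤ ∏_{k=1}^n ∏_{i=1}^m ((1+r_{ik})/(1-r_{ik}))^{w_i}. -/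
/-
Diagonalise `W = ∑ wᵢ Zᵢ = Q D Q*` with eigenvalues `λₖ`. Then `det (1 - W²) = ∏ (1 - λₖ²)`, and
`|det (1 - U W)| = |det (V - D)|` for the unitary `V = (Q* U Q)*`. Lowering a diagonal entry `dₖ` of
`D` to `0` changes `det (V - D)` by `dₖ` times a Cramer coordinate, which the isometry `V` bounds by
the determinant itself; so `|det (V - D)| ≥ ∏ (1 - λₖ)` and the ratio is at most
`∏ (1 + λₖ) / (1 - λₖ)`.

On the other hand `λₖ = ∑ wᵢ (Q* Zᵢ Q)ₖₖ`, and the diagonal of a unitary conjugate of `Zᵢ` is its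
eigenvalue vector `rᵢ` times the doubly stochastic matrix of squared moduli of a unitary. As
`x ↦ log ((1 + x) / (1 - x))` is convex on `[0, 1)`, Jensen's inequality for both averages finishes.
-/

open Matrix BigOperators
open scoped ComplexOrder

section DoublyStochastic

variable {n ι : Type*} [Fintype n] [DecidableEq n] [Fintype ι] {s : Set ℝ}
  {P : Matrix n n ℝ} {x : n → ℝ}

lemma Convex.vecMul_mem (hs : Convex ℝ s) (hP : P ∈ doublyStochastic ℝ n) (hx : ∀ j, x j ∈ s)
    (k : n) : (x ᵥ* P) k ∈ s := by
  simpa [vecMul, dotProduct, mul_comm] using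
    hs.sum_mem (fun j _ ↦ nonneg_of_mem_doublyStochastic hP)
      (sum_col_of_mem_doublyStochastic hP k) (fun j _ ↦ hx j)

lemma Convex.sum_mul_vecMul_mem (hs : Convex ℝ s) {w : ι → ℝ} (hw0 : ∀ i, 0 ≤ w i)
    (hw1 : ∑ i, w i = 1) {P : ι → Matrix n n ℝ} (hP : ∀ i, P i ∈ doublyStochastic ℝ n)
    {x : ι → n → ℝ} (hx : ∀ i j, x i j ∈ s) (k : n) : ∑ i, w i * (x i ᵥ* P i) k ∈ s :=
  hs.sum_mem (fun i _ ↦ hw0 i) hw1 fun i _ ↦ hs.vecMul_mem (hP i) (hx i) k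

lemma ConvexOn.sum_map_vecMul_le {f : ℝ → ℝ} (hf : ConvexOn ℝ s f)
    (hP : P ∈ doublyStochastic ℝ n) (hx : ∀ j, x j ∈ s) :
    ∑ k, f ((x ᵥ* P) k) ≤ ∑ j, f (x j) :=
  calc ∑ k, f ((x ᵥ* P) k) ≤ ∑ k, ∑ j, P j k * f (x j) := by
        refine Finset.sum_le_sum fun k _ ↦ ?_
        simpa [vecMul, dotProduct, mul_comm] using
          hf.map_sum_le (fun j _ ↦ nonneg_of_mem_doublyStochastic hP)
            (sum_col_of_mem_doublyStochastic hP k) (fun j _ ↦ hx j)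
    _ = ∑ j, f (x j) := by
        rw [Finset.sum_comm]
        simp [← Finset.sum_mul, sum_row_of_mem_doublyStochastic hP]

lemma ConvexOn.sum_map_sum_mul_vecMul_le {f : ℝ → ℝ} (hf : ConvexOn ℝ s f) {w : ι → ℝ}
    (hw0 : ∀ i, 0 ≤ w i) (hw1 : ∑ i, w i = 1) {P : ι → Matrix n n ℝ}
    (hP : ∀ i, P i ∈ doublyStochastic ℝ n) {x : ι → n → ℝ} (hx : ∀ i j, x i j ∈ s) :
    ∑ k, f (∑ i, w i * (x i ᵥ* P i) k) ≤ ∑ i, w i * ∑ k, f (x i k) :=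
  calc ∑ k, f (∑ i, w i * (x i ᵥ* P i) k) ≤ ∑ k, ∑ i, w i * f ((x i ᵥ* P i) k) :=
        Finset.sum_le_sum fun k _ ↦ hf.map_sum_le (fun i _ ↦ hw0 i) hw1
          fun i _ ↦ hf.1.vecMul_mem (hP i) (hx i) k
    _ ≤ ∑ i, w i * ∑ k, f (x i k) := by
        rw [Finset.sum_comm]
        exact Finset.sum_le_sum fun i _ ↦ by
          rw [← Finset.mul_sum]
          exact mul_le_mul_of_nonneg_left (hf.sum_map_vecMul_le (hP i) (hx i)) (hw0 i)

end DoublyStochastic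

namespace Matrix

variable {𝕜 n : Type*} [RCLike 𝕜] [Fintype n] [DecidableEq n]

lemma sum_norm_sq_row_of_mem_unitaryGroup {M : Matrix n n 𝕜} (hM : M ∈ unitaryGroup n 𝕜)
    (j : n) : ∑ k, ‖M j k‖ ^ 2 = 1 := by
  have h := congr_fun₂ (mem_unitaryGroup_iff.mp hM) j j
  simp only [mul_apply, star_apply, RCLike.star_def, one_apply_eq, RCLike.mul_conj] at h
  exact_mod_cast h

lemma sum_norm_sq_col_of_mem_unitaryGroup {M : Matrix n n 𝕜} (hM : M ∈ unitaryGroup n 𝕜)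
    (k : n) : ∑ j, ‖M j k‖ ^ 2 = 1 := by
  have h := congr_fun₂ (mem_unitaryGroup_iff'.mp hM) k k
  simp only [mul_apply, star_apply, RCLike.star_def, one_apply_eq, RCLike.conj_mul] at h
  exact_mod_cast h

lemma of_norm_sq_mem_doublyStochastic {M : Matrix n n 𝕜} (hM : M ∈ unitaryGroup n 𝕜) :
    of (fun j k ↦ ‖M j k‖ ^ 2) ∈ doublyStochastic ℝ n :=
  mem_doublyStochastic_iff_sum.mpr ⟨fun _ _ ↦ by simp only [of_apply]; positivity,
    sum_norm_sq_row_of_mem_unitaryGroup hM, sum_norm_sq_col_of_mem_unitaryGroup hM⟩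

lemma conjTranspose_mul_diagonal_mul_apply_self (M : Matrix n n 𝕜) (c : n → ℝ) (k : n) :
    (Mᴴ * diagonal (fun j ↦ (c j : 𝕜)) * M) k k = ((c ᵥ* of fun j k ↦ ‖M j k‖ ^ 2) k : ℝ) := by
  simp only [mul_apply, conjTranspose_apply, diagonal_apply, vecMul, dotProduct, of_apply]
  push_cast
  refine Finset.sum_congr rfl fun j _ ↦ ?_
  simp only [RCLike.star_def, mul_ite, mul_zero, Finset.sum_ite_eq', Finset.mem_univ,
    ↓reduceIte, ← RCLike.conj_mul]
  ring

lemma IsHermitian.exists_mem_doublyStochastic_diag_conj {A : Matrix n n 𝕜} (hA : A.IsHermitian)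
    {Q : Matrix n n 𝕜} (hQ : Q ∈ unitaryGroup n 𝕜) :
    ∃ P ∈ doublyStochastic ℝ n, ∀ k, (star Q * A * Q) k k = ((hA.eigenvalues ᵥ* P) k : 𝕜) := by
  have hM : star (hA.eigenvectorUnitary : Matrix n n 𝕜) * Q ∈ unitaryGroup n 𝕜 :=
    mul_mem (Unitary.star_mem hA.eigenvectorUnitary.2) hQ
  refine ⟨_, of_norm_sq_mem_doublyStochastic hM, fun k ↦ ?_⟩
  rw [← conjTranspose_mul_diagonal_mul_apply_self]
  conv_lhs => rw [hA.spectral_theorem]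
  simp [Matrix.mul_assoc, conjTranspose_mul, star_eq_conjTranspose, Function.comp_def]

lemma IsHermitian.diag_conj_eigenvectorUnitary {A : Matrix n n 𝕜} (hA : A.IsHermitian) (k : n) :
    (star (hA.eigenvectorUnitary : Matrix n n 𝕜) * A * hA.eigenvectorUnitary) k k =
      hA.eigenvalues k := by
  have h := congr_fun₂ hA.conjStarAlgAut_star_eigenvectorUnitary k k
  simpa using h

lemma sum_norm_sq_mulVec_of_mem_unitaryGroup {V : Matrix n n 𝕜} (hV : V ∈ unitaryGroup n 𝕜)
    (y : n → 𝕜) : ∑ l, ‖(V *ᵥ y) l‖ ^ 2 = ∑ l, ‖y l‖ ^ 2 := by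
  have h : star (V *ᵥ y) ⬝ᵥ (V *ᵥ y) = star y ⬝ᵥ y := by
    rw [star_mulVec, dotProduct_mulVec, vecMul_vecMul, ← star_eq_conjTranspose,
      mem_unitaryGroup_iff'.mp hV, vecMul_one]
  simp only [dotProduct, Pi.star_apply, RCLike.star_def, RCLike.conj_mul] at h
  exact_mod_cast h

lemma norm_apply_le_of_sub_diagonal_mulVec_eq_single {V : Matrix n n 𝕜}
    (hV : V ∈ unitaryGroup n 𝕜) {d : n → ℝ} (hd : ∀ j, |d j| ≤ 1) {k : n} (hk : d k = 0)
    {y : n → 𝕜} {c : 𝕜} (hy : (V - diagonal fun j ↦ (d j : 𝕜)) *ᵥ y = Pi.single k c) :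
    ‖y k‖ ≤ ‖c‖ := by
  have hVy : ∀ l, ‖(V *ᵥ y) l‖ ^ 2 = ‖(Pi.single k c : n → 𝕜) l‖ ^ 2 + d l ^ 2 * ‖y l‖ ^ 2 := by
    intro l
    have := congr_fun hy l
    rw [sub_mulVec, Pi.sub_apply, mulVec_diagonal, sub_eq_iff_eq_add] at this
    rw [this]
    rcases eq_or_ne l k with rfl | hl
    · simp [hk]
    · simp [hl, norm_mul, mul_pow]
  have hsum : ∑ l, (1 - d l ^ 2) * ‖y l‖ ^ 2 = ‖c‖ ^ 2 := by
    have := sum_norm_sq_mulVec_of_mem_unitaryGroup hV y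
    have hc : ∑ l, ‖(Pi.single k c : n → 𝕜) l‖ ^ 2 = ‖c‖ ^ 2 := by
      rw [Fintype.sum_eq_single k fun l hl ↦ by simp [hl]]
      simp
    simp only [hVy, Finset.sum_add_distrib, hc] at this
    simp only [sub_mul, one_mul, Finset.sum_sub_distrib]
    linarith
  have hterm : (1 - d k ^ 2) * ‖y k‖ ^ 2 ≤ ‖c‖ ^ 2 :=
    hsum ▸ Finset.single_le_sum (f := fun l ↦ (1 - d l ^ 2) * ‖y l‖ ^ 2)
      (fun l _ ↦ mul_nonneg (by nlinarith [abs_le.mp (hd l), sq_abs (d l)]) (by positivity))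
      (Finset.mem_univ k)
  rw [hk] at hterm
  exact (pow_le_pow_iff_left₀ (norm_nonneg _) (norm_nonneg _) two_ne_zero).mp
    (by simpa using hterm)

lemma det_sub_diagonal_single {R : Type*} [CommRing R] (A : Matrix n n R) (k : n) (t : R) :
    (A - diagonal (Pi.single k t)).det = A.det - t * (A.updateCol k (Pi.single k 1)).det := by
  have hA : A - diagonal (Pi.single k t) =
      A.updateCol k ((fun i ↦ A i k) + (-t) • Pi.single k 1) := by
    ext i j
    rcases eq_or_ne j k with rfl | hj <;> rcases eq_or_ne i j with rfl | hi <;>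
      simp [diagonal_apply_ne, *, sub_eq_add_neg]
  rw [hA, det_updateCol_add, det_updateCol_smul, updateCol_eq_self]
  ring

lemma mul_norm_det_sub_diagonal_le_norm_det_sub_diagonal_update {V : Matrix n n 𝕜}
    (hV : V ∈ unitaryGroup n 𝕜) {d : n → ℝ} (hd : ∀ j, |d j| ≤ 1) {k : n} (hk : d k = 0)
    {t : ℝ} (ht : 0 ≤ t) :
    (1 - t) * ‖(V - diagonal fun j ↦ (d j : 𝕜)).det‖ ≤
      ‖(V - diagonal fun j ↦ (Function.update d k t j : 𝕜)).det‖ := by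
  set A := V - diagonal fun j ↦ (d j : 𝕜)
  have hA : (V - diagonal fun j ↦ (Function.update d k t j : 𝕜)) =
      A - diagonal (Pi.single k (t : 𝕜)) := by
    rw [sub_sub, diagonal_add]
    congr 2
    ext j
    rcases eq_or_ne j k with rfl | hj
    · simp [hk]
    · simp [hj]
  have hy : ‖cramer A (Pi.single k 1) k‖ ≤ ‖A.det‖ :=
    norm_apply_le_of_sub_diagonal_mulVec_eq_single hV hd hk
      (by rw [mulVec_cramer]; ext; simp [Pi.single_apply, A])
  rw [hA, det_sub_diagonal_single, ← cramer_apply]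
  calc (1 - t) * ‖A.det‖ ≤ ‖A.det‖ - ‖(t : 𝕜) * cramer A (Pi.single k 1) k‖ := by
        rw [norm_mul, RCLike.norm_ofReal, abs_of_nonneg ht]
        nlinarith
    _ ≤ _ := norm_sub_norm_le _ _

lemma norm_det_of_mem_unitaryGroup {V : Matrix n n 𝕜} (hV : V ∈ unitaryGroup n 𝕜) :
    ‖V.det‖ = 1 :=
  CStarRing.norm_of_mem_unitary (det_of_mem_unitary hV)

theorem prod_one_sub_le_norm_det_sub_diagonal {V : Matrix n n 𝕜} (hV : V ∈ unitaryGroup n 𝕜)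
    {d : n → ℝ} (hd0 : ∀ j, 0 ≤ d j) (hd1 : ∀ j, d j ≤ 1) :
    ∏ j, (1 - d j) ≤ ‖(V - diagonal fun j ↦ (d j : 𝕜)).det‖ := by
  suffices h : ∀ s : Finset n,
      ∏ j ∈ s, (1 - d j) ≤ ‖(V - diagonal fun j ↦ (s.piecewise d 0 j : 𝕜)).det‖ by
    simpa using h Finset.univ
  intro s
  induction s using Finset.induction_on with
  | empty => simp [norm_det_of_mem_unitaryGroup hV]
  | insert k s hk ih =>
    rw [Finset.prod_insert hk, Finset.piecewise_insert]
    refine (mul_le_mul_of_nonneg_left ih (by linarith [hd1 k])).trans ?_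
    refine mul_norm_det_sub_diagonal_le_norm_det_sub_diagonal_update hV (fun j ↦ ?_)
      (Finset.piecewise_eq_of_notMem _ _ _ hk) (hd0 k)
    by_cases hj : j ∈ s
    · simpa [hj, abs_of_nonneg (hd0 j)] using hd1 j
    · simp [hj]

lemma det_conjStarAlgAut (U : unitary (Matrix n n 𝕜)) (X : Matrix n n 𝕜) :
    (Unitary.conjStarAlgAut 𝕜 _ U X).det = X.det := by
  rw [Unitary.conjStarAlgAut_apply]
  exact det_conj_of_mul_eq_one (Unitary.mul_star_self_of_mem U.2)
    (Unitary.star_mul_self_of_mem U.2)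

variable {A : Matrix n n 𝕜}

lemma IsHermitian.det_one_sub_sq_s13 (hA : A.IsHermitian) :
    (1 - A ^ 2).det = ∏ k, ((1 - hA.eigenvalues k ^ 2 : ℝ) : 𝕜) := by
  conv_lhs => rw [hA.spectral_theorem]
  rw [← map_pow, ← map_one (Unitary.conjStarAlgAut 𝕜 _ hA.eigenvectorUnitary), ← map_sub,
    det_conjStarAlgAut, diagonal_pow, ← diagonal_one, diagonal_sub, det_diagonal]
  simp

lemma IsHermitian.prod_one_sub_eigenvalues_le_norm_det_one_sub_mul (hA : A.IsHermitian)
    (h0 : ∀ k, 0 ≤ hA.eigenvalues k) (h1 : ∀ k, hA.eigenvalues k ≤ 1) {U : Matrix n n 𝕜}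
    (hU : U ∈ unitaryGroup n 𝕜) :
    ∏ k, (1 - hA.eigenvalues k) ≤ ‖(1 - U * A).det‖ := by
  set Q := hA.eigenvectorUnitary
  set V : Matrix n n 𝕜 := star (Q : Matrix n n 𝕜) * U * Q
  have hV : V ∈ unitaryGroup n 𝕜 := mul_mem (mul_mem (Unitary.star_mem Q.2) hU) Q.2
  have hconj : Unitary.conjStarAlgAut 𝕜 _ (star Q) (1 - U * A) =
      V * (star V - diagonal fun k ↦ (hA.eigenvalues k : 𝕜)) := by
    rw [mul_sub, Unitary.mul_star_self_of_mem hV, map_sub, map_one, map_mul,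
      hA.conjStarAlgAut_star_eigenvectorUnitary, Unitary.conjStarAlgAut_star_apply]
    rfl
  rw [← det_conjStarAlgAut (star Q), hconj, det_mul, norm_mul, norm_det_of_mem_unitaryGroup hV,
    one_mul]
  exact prod_one_sub_le_norm_det_sub_diagonal (Unitary.star_mem hV) h0 h1

lemma IsHermitian.re_det_one_sub_sq_div_le (hA : A.IsHermitian)
    (h0 : ∀ k, 0 ≤ hA.eigenvalues k) (h1 : ∀ k, hA.eigenvalues k < 1) {U : Matrix n n 𝕜}
    (hU : U ∈ unitaryGroup n 𝕜) :
    RCLike.re (1 - A ^ 2).det / ‖(1 - U * A).det‖ ^ 2 ≤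
      ∏ k, (1 + hA.eigenvalues k) / (1 - hA.eigenvalues k) := by
  have hpos : 0 < ∏ k, (1 - hA.eigenvalues k) :=
    Finset.prod_pos fun k _ ↦ sub_pos.mpr (h1 k)
  have hden := pow_le_pow_left₀ hpos.le
    (hA.prod_one_sub_eigenvalues_le_norm_det_one_sub_mul h0 (fun k ↦ (h1 k).le) hU) 2
  rw [hA.det_one_sub_sq_s13, ← RCLike.ofReal_prod, RCLike.ofReal_re]
  calc (∏ k, (1 - hA.eigenvalues k ^ 2)) / ‖(1 - U * A).det‖ ^ 2
      ≤ (∏ k, (1 - hA.eigenvalues k ^ 2)) / (∏ k, (1 - hA.eigenvalues k)) ^ 2 :=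
        div_le_div_of_nonneg_left (Finset.prod_nonneg fun k _ ↦ by nlinarith [h0 k, h1 k])
          (by positivity) hden
    _ = ∏ k, (1 + hA.eigenvalues k) / (1 - hA.eigenvalues k) := by
        rw [← Finset.prod_pow, ← Finset.prod_div_distrib]
        refine Finset.prod_congr rfl fun k _ ↦ ?_
        have : 1 - hA.eigenvalues k ≠ 0 := (sub_pos.mpr (h1 k)).ne'
        field_simp
        ring

end Matrix

lemma Real.convexOn_log_one_add_div_one_sub :
    ConvexOn ℝ (Set.Ico 0 1) fun x ↦ Real.log ((1 + x) / (1 - x)) := by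
  have hderiv : ∀ x ∈ Set.Ioo (-1 : ℝ) 1,
      HasDerivAt (fun x ↦ Real.log (1 + x) - Real.log (1 - x)) (2 / (1 - x ^ 2)) x := by
    rintro x ⟨hx0, hx1⟩
    have h1 : 1 + x ≠ 0 := by linarith
    have h2 : 1 - x ≠ 0 := by linarith
    refine ((((hasDerivAt_id x).const_add 1).log h1).sub
      (((hasDerivAt_id x).const_sub 1).log h2)).congr_deriv ?_
    have h3 : 1 - x ^ 2 ≠ 0 := by nlinarith
    simp only [id]
    field_simp
    ring
  have hconv : ConvexOn ℝ (Set.Ico 0 1) fun x ↦ Real.log (1 + x) - Real.log (1 - x) := by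
    refine MonotoneOn.convexOn_of_deriv (convex_Ico 0 1) ?_ ?_ ?_
    · exact fun x hx ↦ (hderiv x ⟨by linarith [hx.1], hx.2⟩).continuousAt.continuousWithinAt
    · rw [interior_Ico]
      exact fun x hx ↦
        (hderiv x ⟨by linarith [hx.1], hx.2⟩).differentiableAt.differentiableWithinAt
    · rw [interior_Ico]
      intro x hx y hy hxy
      rw [(hderiv x ⟨by linarith [hx.1], hx.2⟩).deriv,
        (hderiv y ⟨by linarith [hy.1], hy.2⟩).deriv]
      exact div_le_div_of_nonneg_left zero_le_two (by nlinarith [hy.2, hy.1])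
        (by nlinarith [hx.1])
  refine hconv.congr fun x hx ↦ ?_
  rw [Real.log_div (by linarith [hx.1]) (by linarith [hx.2])]

lemma prod_one_add_div_one_sub_le_prod_prod_rpow {ι n : Type*} [Fintype ι] [Fintype n]
    [DecidableEq n] {w : ι → ℝ} (hw0 : ∀ i, 0 ≤ w i) (hw1 : ∑ i, w i = 1)
    {P : ι → Matrix n n ℝ} (hP : ∀ i, P i ∈ doublyStochastic ℝ n) {r : ι → n → ℝ}
    (hr : ∀ i j, r i j ∈ Set.Ico 0 1) :
    ∏ k, (1 + ∑ i, w i * (r i ᵥ* P i) k) / (1 - ∑ i, w i * (r i ᵥ* P i) k) ≤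
      ∏ k, ∏ i, ((1 + r i k) / (1 - r i k)) ^ w i := by
  set g : ℝ → ℝ := fun x ↦ Real.log ((1 + x) / (1 - x))
  have hexp : ∀ x ∈ Set.Ico (0 : ℝ) 1, Real.exp (g x) = (1 + x) / (1 - x) := fun x hx ↦
    Real.exp_log (div_pos (by linarith [hx.1]) (by linarith [hx.2]))
  calc ∏ k, (1 + ∑ i, w i * (r i ᵥ* P i) k) / (1 - ∑ i, w i * (r i ᵥ* P i) k)
      = Real.exp (∑ k, g (∑ i, w i * (r i ᵥ* P i) k)) := by
        rw [Real.exp_sum]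
        exact Finset.prod_congr rfl fun k _ ↦
          (hexp _ ((convex_Ico 0 1).sum_mul_vecMul_mem hw0 hw1 hP hr k)).symm
    _ ≤ Real.exp (∑ i, w i * ∑ k, g (r i k)) :=
        Real.exp_le_exp.mpr
          (Real.convexOn_log_one_add_div_one_sub.sum_map_sum_mul_vecMul_le hw0 hw1 hP hr)
    _ = ∏ k, ∏ i, ((1 + r i k) / (1 - r i k)) ^ w i := by
        simp only [Finset.mul_sum, Real.exp_sum]
        rw [Finset.prod_comm]
        refine Finset.prod_congr rfl fun k _ ↦ Finset.prod_congr rfl fun i _ ↦ ?_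
        rw [Real.rpow_def_of_pos (by rw [← hexp _ (hr i k)]; positivity), mul_comm]

/-- Multi-matrix Harnack-type upper bound: for positive semidefinite `Z i` with eigenvalues
`r i k ∈ [0,1)`, unitary `U`, and weights `w i > 0` with `Σ w i = 1`,
`det(I - (Σ w i Z i)²)/|det(I - U Σ w i Z i)|² ≤ ∏_k ∏_i ((1 + r i k)/(1 - r i k))^(w i)`. -/
theorem multi_harnack_upper (n m : ℕ) (Z : Fin m → Matrix (Fin n) (Fin n) ℂ)
    (hZ : ∀ i, (Z i).PosSemidef)
    (r : Fin m → Fin n → ℝ) (hr : ∀ i k, r i k = (hZ i).1.eigenvalues k)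
    (hr0 : ∀ i k, 0 ≤ r i k) (hr1 : ∀ i k, r i k < 1)
    (U : Matrix (Fin n) (Fin n) ℂ) (hU : U ∈ Matrix.unitaryGroup (Fin n) ℂ)
    (w : Fin m → ℝ) (hw : ∀ i, 0 < w i) (hw1 : ∑ i, w i = 1) :
    ((1 - (∑ i, (w i : ℂ) • Z i) ^ 2).det).re
        / ‖(1 - U * ∑ i, (w i : ℂ) • Z i).det‖ ^ 2
      ≤ ∏ k, ∏ i, ((1 + r i k) / (1 - r i k)) ^ (w i) := by
  set W := ∑ i, (w i : ℂ) • Z i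
  have hW : W.IsHermitian :=
    (posSemidef_sum _ fun i _ ↦ (hZ i).smul (by exact_mod_cast (hw i).le)).isHermitian
  obtain rfl : r = fun i ↦ (hZ i).1.eigenvalues := funext₂ hr
  choose P hP hPdiag using fun i ↦
    (hZ i).1.exists_mem_doublyStochastic_diag_conj hW.eigenvectorUnitary.2
  have hlam : ∀ k, hW.eigenvalues k = ∑ i, w i * ((hZ i).1.eigenvalues ᵥ* P i) k := by
    intro k
    have h := hW.diag_conj_eigenvectorUnitary k
    rw [Finset.mul_sum, Finset.sum_mul] at h
    simp only [Matrix.mul_smul, Matrix.smul_mul, Matrix.sum_apply, Matrix.smul_apply, hPdiag,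
      smul_eq_mul] at h
    apply Complex.ofReal_injective
    push_cast
    exact h.symm
  have hZmem : ∀ i j, (hZ i).1.eigenvalues j ∈ Set.Ico 0 1 := fun i j ↦ ⟨hr0 i j, hr1 i j⟩
  have hWmem : ∀ k, hW.eigenvalues k ∈ Set.Ico 0 1 := fun k ↦
    hlam k ▸ (convex_Ico 0 1).sum_mul_vecMul_mem (fun i ↦ (hw i).le) hw1 hP hZmem k
  calc _ ≤ ∏ k, (1 + hW.eigenvalues k) / (1 - hW.eigenvalues k) :=
        hW.re_det_one_sub_sq_div_le (fun k ↦ (hWmem k).1) (fun k ↦ (hWmem k).2) hU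
    _ ≤ _ := by
        simp only [hlam]
        exact prod_one_add_div_one_sub_le_prod_prod_rpow (fun i ↦ (hw i).le) hw1 hP hZmem
end

section
/- Let A and B be n×n Hermitian matrices such that λ_k(A+B) = λ_k(A) + λ_k(B) for all k = 1,...,n, where λ_k denotes the k-th largest eigenvalue. Then A and B are simultaneously unitarily diagonalizable with their eigenvalues appearing on the diagonal in the same (nonincreasing) order. -/
/-!
Conjugate by a unitary `W` with `Wᴴ (A + B) W = diag γ` and put `M = Wᴴ A W`, `N = Wᴴ B W`.
By Ky Fan's inequality the partial sums `∑_{i < k} M i i` are at most `∑_{i < k} α i`, and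
likewise for `N` and `β`. The diagonals of `M` and `N` add up to `γ = α + β`, so all these
inequalities are equalities and the diagonal of `M` is `α`. A matrix unitarily similar to
`diag α` with diagonal `α` has no mass left off the diagonal (compare Frobenius norms), so
`M = diag α`, and then `N = diag γ - diag α = diag β`.
-/

open Finset Matrix
open scoped ComplexOrder

section Threshold

variable {ι : Type*} [Fintype ι]

/- The gap equals `∑ i, (𝟙_S i - c i) * (α i - t)` because `∑ i, c i = #S`, and every term is
nonnegative since both factors change sign exactly across `S`. -/
theorem sum_mul_le_sum_of_threshold {c α : ι → ℝ} {S : Finset ι} {t : ℝ}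
    (hc₀ : ∀ i, 0 ≤ c i) (hc₁ : ∀ i, c i ≤ 1) (hc : ∑ i, c i = #S)
    (hS : ∀ i ∈ S, t ≤ α i) (hSc : ∀ i ∉ S, α i ≤ t) :
    ∑ i, c i * α i ≤ ∑ i ∈ S, α i := by
  classical
  have hgap : ∑ i ∈ S, α i - ∑ i, c i * α i
      = ∑ i, ((if i ∈ S then 1 else 0) - c i) * (α i - t) := by
    simp only [sub_mul, mul_sub, ite_mul, one_mul, zero_mul, sum_sub_distrib, sum_ite_mem,
      univ_inter, ← sum_mul, hc, sum_const, nsmul_eq_mul]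
    ring
  have hterm : ∀ i, 0 ≤ ((if i ∈ S then 1 else 0) - c i) * (α i - t) := by
    intro i
    by_cases hi : i ∈ S
    · simp only [hi, if_true]
      exact mul_nonneg (by linarith [hc₁ i]) (by linarith [hS i hi])
    · simp only [hi, if_false, zero_sub]
      exact mul_nonneg_of_nonpos_of_nonpos (by linarith [hc₀ i]) (by linarith [hSc i hi])
  linarith [sum_nonneg fun i (_ : i ∈ univ) => hterm i]

end Threshold

section UnitaryConjugation

variable {ι : Type*} [Fintype ι] [DecidableEq ι]

theorem submatrix_id_equiv_mem_unitaryGroup {R : Type*} [CommRing R] [StarRing R]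
    {U : Matrix ι ι R} (hU : U ∈ unitaryGroup ι R) (σ : Equiv.Perm ι) :
    U.submatrix id σ ∈ unitaryGroup ι R := by
  rw [mem_unitaryGroup_iff', star_eq_conjTranspose, conjTranspose_submatrix,
    ← Equiv.coe_refl, submatrix_mul_equiv, ← star_eq_conjTranspose,
    Unitary.star_mul_self_of_mem hU, submatrix_one_equiv]

omit [DecidableEq ι] in
theorem conj_submatrix_id_equiv {R : Type*} [NonUnitalNonAssocSemiring R] [Star R]
    (U D : Matrix ι ι R) (σ : Equiv.Perm ι) :
    U.submatrix id σ * D.submatrix σ σ * (U.submatrix id σ)ᴴ = U * D * Uᴴ := by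
  rw [conjTranspose_submatrix, submatrix_mul_equiv U D id σ σ,
    submatrix_mul_equiv (U * D) Uᴴ id σ id, submatrix_id_id]

theorem Matrix.IsHermitian.exists_unitary_eq_conj_diagonal {𝕜 : Type*} [RCLike 𝕜]
    {X : Matrix ι ι 𝕜} (hX : X.IsHermitian) {δ : ι → ℝ}
    (hδ : ∃ σ : Equiv.Perm ι, δ = hX.eigenvalues ∘ σ) :
    ∃ U ∈ unitaryGroup ι 𝕜, X = U * diagonal (fun i => (δ i : 𝕜)) * Uᴴ := by
  obtain ⟨σ, rfl⟩ := hδ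
  refine ⟨(hX.eigenvectorUnitary : Matrix ι ι 𝕜).submatrix id σ,
    submatrix_id_equiv_mem_unitaryGroup hX.eigenvectorUnitary.2 σ, ?_⟩
  have hD : diagonal (fun i => ((hX.eigenvalues ∘ σ) i : 𝕜))
      = (diagonal (RCLike.ofReal ∘ hX.eigenvalues)).submatrix σ σ :=
    (submatrix_diagonal_equiv (RCLike.ofReal ∘ hX.eigenvalues) σ).symm
  rw [hD, conj_submatrix_id_equiv]
  exact hX.spectral_theorem

/- Expanding `‖M - D‖²_F = tr((M - D)(M - D)ᴴ)`, each of the four traces equals `tr(D Dᴴ)`: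
for `M Mᴴ` by unitary invariance, for the cross terms because `M` and `D` share the diagonal. -/
theorem conj_diagonal_eq_diagonal_of_diag_eq {R : Type*} [CommRing R] [StarRing R]
    [PartialOrder R] [StarOrderedRing R] [NoZeroDivisors R] {Q : Matrix ι ι R}
    (hQ : Q ∈ unitaryGroup ι R) {d : ι → R}
    (h : ∀ i, (Q * diagonal d * Qᴴ) i i = d i) :
    Q * diagonal d * Qᴴ = diagonal d := by
  set M := Q * diagonal d * Qᴴ
  have hQQ : Qᴴ * Q = 1 := Unitary.star_mul_self_of_mem hQ
  have hMM : (M * Mᴴ).trace = (diagonal d * (diagonal d)ᴴ).trace := by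
    have hconj : M * Mᴴ = Q * (diagonal d * (diagonal d)ᴴ) * Qᴴ := by
      simp only [M, conjTranspose_mul, conjTranspose_conjTranspose, mul_assoc]
      rw [← mul_assoc Qᴴ Q, hQQ, one_mul]
    rw [hconj, trace_mul_comm, ← mul_assoc, hQQ, one_mul]
  have hMD : (M * (diagonal d)ᴴ).trace = (diagonal d * (diagonal d)ᴴ).trace := by
    simp only [diagonal_conjTranspose, mul_diagonal, trace, diag_apply, h, diagonal_apply_eq]
  have hDM : (diagonal d * Mᴴ).trace = (diagonal d * (diagonal d)ᴴ).trace := by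
    rw [← conjTranspose_conjTranspose (diagonal d), ← conjTranspose_mul, trace_conjTranspose,
      hMD, ← trace_conjTranspose, conjTranspose_mul, conjTranspose_conjTranspose]
  rw [← sub_eq_zero, ← trace_mul_conjTranspose_self_eq_zero_iff, conjTranspose_sub, sub_mul,
    mul_sub, mul_sub, trace_sub, trace_sub, trace_sub, hMM, hMD, hDM]
  abel

theorem conj_diagonal_ofReal_apply_self (Q : Matrix ι ι ℂ) (α : ι → ℝ) (j : ι) :
    (Q * diagonal (fun i => (α i : ℂ)) * Qᴴ) j j
      = ↑(∑ l, Complex.normSq (Q j l) * α l) := by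
  rw [mul_apply]
  push_cast
  refine sum_congr rfl fun l _ => ?_
  rw [mul_diagonal, conjTranspose_apply, Complex.star_def,
    Complex.normSq_eq_conj_mul_self]
  ring

theorem sum_normSq_row_eq_one {Q : Matrix ι ι ℂ} (hQ : Q ∈ unitaryGroup ι ℂ) (j : ι) :
    ∑ l, Complex.normSq (Q j l) = 1 := by
  have hQQ : Q * Qᴴ = 1 := Unitary.mul_star_self_of_mem hQ
  have h := conj_diagonal_ofReal_apply_self Q 1 j
  simp only [Pi.one_apply, Complex.ofReal_one, mul_one, diagonal_one, hQQ,
    one_apply_eq] at h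
  exact_mod_cast h.symm

theorem sum_normSq_col_eq_one {Q : Matrix ι ι ℂ} (hQ : Q ∈ unitaryGroup ι ℂ) (l : ι) :
    ∑ j, Complex.normSq (Q j l) = 1 := by
  simpa [conjTranspose_apply] using sum_normSq_row_eq_one (Unitary.star_mem hQ) l

/- Ky Fan's inequality: the diagonal of `Q D Qᴴ` is `α` averaged by the doubly stochastic
matrix `(|Q j l|²)`. -/
theorem sum_conj_diagonal_apply_self_re_le {Q : Matrix ι ι ℂ}
    (hQ : Q ∈ unitaryGroup ι ℂ) {α : ι → ℝ} {S : Finset ι} {t : ℝ}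
    (hS : ∀ i ∈ S, t ≤ α i) (hSc : ∀ i ∉ S, α i ≤ t) :
    ∑ j ∈ S, ((Q * diagonal (fun i => (α i : ℂ)) * Qᴴ) j j).re ≤ ∑ j ∈ S, α j := by
  set c : ι → ℝ := fun l => ∑ j ∈ S, Complex.normSq (Q j l)
  have hc₁ : ∀ l, c l ≤ 1 := fun l =>
    (sum_le_univ_sum_of_nonneg fun j => Complex.normSq_nonneg _).trans_eq
      (sum_normSq_col_eq_one hQ l)
  have hc : ∑ l, c l = #S := by
    rw [sum_comm, sum_congr rfl fun j _ => sum_normSq_row_eq_one hQ j, sum_const, nsmul_one]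
  calc ∑ j ∈ S, ((Q * diagonal (fun i => (α i : ℂ)) * Qᴴ) j j).re
      = ∑ l, c l * α l := by
        simp only [conj_diagonal_ofReal_apply_self, Complex.ofReal_re, c, sum_mul]
        exact sum_comm
    _ ≤ ∑ j ∈ S, α j :=
        sum_mul_le_sum_of_threshold (fun l => sum_nonneg fun j _ => Complex.normSq_nonneg _)
          hc₁ hc hS hSc

end UnitaryConjugation

theorem conj_diagonal_eq_diagonal_of_add_eq_diagonal {ι : Type*} [Fintype ι] [LinearOrder ι]
    [LocallyFiniteOrderBot ι] {α β : ι → ℝ} (hα : Antitone α) (hβ : Antitone β)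
    {Q R : Matrix ι ι ℂ} (hQ : Q ∈ unitaryGroup ι ℂ) (hR : R ∈ unitaryGroup ι ℂ)
    (h : Q * diagonal (fun i => (α i : ℂ)) * Qᴴ
        + R * diagonal (fun i => (β i : ℂ)) * Rᴴ
      = diagonal (fun i => ((α i + β i : ℝ) : ℂ))) :
    Q * diagonal (fun i => (α i : ℂ)) * Qᴴ = diagonal (fun i => (α i : ℂ)) := by
  set M := Q * diagonal (fun i => (α i : ℂ)) * Qᴴ
  set N := R * diagonal (fun i => (β i : ℂ)) * Rᴴ
  have hdiag : ∀ i, (M i i).re + (N i i).re = α i + β i := fun i => by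
    simpa using congrArg Complex.re (congrFun (congrFun h i) i)
  have hsum : ∀ (j : ι) (S : Finset ι), (∀ i ∈ S, i ≤ j) → (∀ i ∉ S, j ≤ i) →
      ∑ i ∈ S, (M i i).re = ∑ i ∈ S, α i := by
    intro j S hS hSc
    have hM := sum_conj_diagonal_apply_self_re_le hQ (t := α j) (fun i hi => hα (hS i hi))
      (fun i hi => hα (hSc i hi))
    have hN := sum_conj_diagonal_apply_self_re_le hR (t := β j) (fun i hi => hβ (hS i hi))
      (fun i hi => hβ (hSc i hi))
    have hMN : ∑ i ∈ S, ((M i i).re + (N i i).re) = ∑ i ∈ S, (α i + β i) :=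
      sum_congr rfl fun i _ => hdiag i
    rw [sum_add_distrib, sum_add_distrib] at hMN
    linarith
  refine conj_diagonal_eq_diagonal_of_diag_eq hQ fun j => Complex.ext ?_ ?_
  · have hIio := hsum j (Iio j) (fun i hi => (mem_Iio.mp hi).le)
      (fun i hi => not_lt.mp (mt mem_Iio.mpr hi))
    have hIic := hsum j (Iic j) (fun i hi => mem_Iic.mp hi)
      (fun i hi => (not_le.mp (mt mem_Iic.mpr hi)).le)
    rw [← Iio_insert, sum_insert notMem_Iio_self, sum_insert notMem_Iio_self] at hIic
    simp only [Complex.ofReal_re]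
    linarith
  · simp [conj_diagonal_ofReal_apply_self]

theorem simultaneous_diagonalization_of_eigenvalue_additivity_general
    (n : ℕ) (A B : Matrix (Fin n) (Fin n) ℂ)
    (hA : A.IsHermitian) (hB : B.IsHermitian) (hAB : (A + B).IsHermitian)
    (α β γ : Fin n → ℝ)
    (hα : Antitone α) (hβ : Antitone β)
    (hαA : ∃ σ : Equiv.Perm (Fin n), α = hA.eigenvalues ∘ σ)
    (hβB : ∃ σ : Equiv.Perm (Fin n), β = hB.eigenvalues ∘ σ)
    (hγAB : ∃ σ : Equiv.Perm (Fin n), γ = hAB.eigenvalues ∘ σ)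
    (hsum : ∀ k, γ k = α k + β k) :
    ∃ V ∈ Matrix.unitaryGroup (Fin n) ℂ,
      Vᴴ * A * V = Matrix.diagonal (fun k => (α k : ℂ)) ∧
      Vᴴ * B * V = Matrix.diagonal (fun k => (β k : ℂ)) := by
  obtain ⟨W, hW, hABW⟩ := hAB.exists_unitary_eq_conj_diagonal hγAB
  obtain ⟨U, hU, hAU⟩ := hA.exists_unitary_eq_conj_diagonal hαA
  obtain ⟨U', hU', hBU'⟩ := hB.exists_unitary_eq_conj_diagonal hβB
  have hWW : Wᴴ * W = 1 := Unitary.star_mul_self_of_mem hW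
  have hconj : ∀ X V D : Matrix (Fin n) (Fin n) ℂ,
      X = V * D * Vᴴ → Wᴴ * X * W = (Wᴴ * V) * D * (Wᴴ * V)ᴴ := by
    rintro X V D rfl
    simp only [conjTranspose_mul, conjTranspose_conjTranspose, mul_assoc]
  have hWAB : Wᴴ * A * W + Wᴴ * B * W = diagonal (fun k => ((α k + β k : ℝ) : ℂ)) := by
    rw [← add_mul, ← mul_add, hconj _ _ _ hABW, hWW, conjTranspose_one,
      one_mul, mul_one]
    simp only [hsum]
    rfl
  have hWA : Wᴴ * A * W = diagonal (fun k => (α k : ℂ)) := by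
    rw [hconj _ _ _ hAU, hconj _ _ _ hBU'] at hWAB
    rw [hconj _ _ _ hAU]
    exact conj_diagonal_eq_diagonal_of_add_eq_diagonal hα hβ
      (Submonoid.mul_mem _ (Unitary.star_mem hW) hU)
      (Submonoid.mul_mem _ (Unitary.star_mem hW) hU') hWAB
  refine ⟨W, hW, hWA, ?_⟩
  rw [← add_right_inj (Wᴴ * A * W), hWAB, hWA, diagonal_add]
  simp only [Complex.ofReal_add]

/-- If `A`, `B` are Hermitian and the `k`-th largest eigenvalue of `A + B` equals the sum
of the `k`-th largest eigenvalues of `A` and `B` for every `k` (expressed via antitone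
enumerations `α`, `β`, `γ` of the respective spectra), then `A` and `B` are simultaneously
unitarily diagonalizable with eigenvalues on the diagonal in the same nonincreasing order. -/
theorem simultaneous_diagonalization_of_eigenvalue_additivity
    (n : ℕ) (A B : Matrix (Fin n) (Fin n) ℂ)
    (hA : A.IsHermitian) (hB : B.IsHermitian) (hAB : (A + B).IsHermitian)
    (α β γ : Fin n → ℝ)
    (hα : Antitone α) (hβ : Antitone β) (hγ : Antitone γ)
    (hαA : ∃ σ : Equiv.Perm (Fin n), α = hA.eigenvalues ∘ σ)
    (hβB : ∃ σ : Equiv.Perm (Fin n), β = hB.eigenvalues ∘ σ)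
    (hγAB : ∃ σ : Equiv.Perm (Fin n), γ = hAB.eigenvalues ∘ σ)
    (hsum : ∀ k, γ k = α k + β k) :
    ∃ V ∈ Matrix.unitaryGroup (Fin n) ℂ,
      Vᴴ * A * V = Matrix.diagonal (fun k => (α k : ℂ)) ∧
      Vᴴ * B * V = Matrix.diagonal (fun k => (β k : ℂ)) :=
  simultaneous_diagonalization_of_eigenvalue_additivity_general n A B hA hB hAB α β γ hα hβ hαA hβB
    hγAB hsum
end
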